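/- arXiv:1302.0059 — 4 statements merged into one kernel-verified Lean document; each statement's English description precedes it below -/
import Mathlib

section
/- For every r ∈ (0,1), let P_r be the 3×2 real matrix with columns (1−r, r, 0)ᵀ and (0, 1−r, r)ᵀ (rows indexed by {0,1,2}, columns by {0,1}). Then the pair (P_r, I) is non-manipulable: the only 3×3 real matrix Υ such that every column of Υ sums to zero, the j-th column of Υ has nonpositive j-th entry and nonnegative entries elsewhere for each j ∈ {0,1,2}, and Υ P_r = 0, is Υ = 0. In particular, for the binary erasure MAC U = X₁ + X₂ with binary inputs and input pmfs P_{X₁}(1) = p ∈ (0,1), P_{X₂}(1) = q ∈ (0,1), both observation channels (P_{U|X₁}, I) = (P_q, I) and (P_{U|X₂}, I) = (P_p, I) are non-manipulable. -/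
open Finset

/-- A probability mass function on a finite alphabet. -/
def IsPMF {α : Type} [Fintype α] (p : α → ℝ) : Prop :=
  (∀ a, 0 ≤ p a) ∧ ∑ a, p a = 1

/-- `(P, I)` is non-manipulable: the only |𝒰|×|𝒰| matrix `M` with balanced,
`(0,0)`-polarized columns (column `j` sums to zero, has nonpositive `j`-th entry
and nonnegative entries elsewhere) satisfying `M * P = 0` is `M = 0`. -/
def NonManipulable {𝒰 𝒳 : Type} [Fintype 𝒰] [Fintype 𝒳] (P : 𝒰 → 𝒳 → ℝ) : Prop :=
  ∀ M : 𝒰 → 𝒰 → ℝ,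
    (∀ j, ∑ i, M i j = 0) →
    (∀ j, M j j ≤ 0) →
    (∀ i j, i ≠ j → 0 ≤ M i j) →
    (∀ i x, ∑ u, M i u * P u x = 0) →
    ∀ i j, M i j = 0

/-- The 3×2 matrix with columns `(1-r, r, 0)ᵀ` and `(0, 1-r, r)ᵀ`
(rows indexed by {0,1,2}, columns by {0,1}). -/
noncomputable def Pmat (r : ℝ) : Fin 3 → Fin 2 → ℝ := fun u x =>
  if (u : ℕ) = (x : ℕ) then 1 - r else if (u : ℕ) = (x : ℕ) + 1 then r else 0

/-- The binary erasure MAC: `U = X₁ + X₂` with binary inputs and ternary output. -/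
noncomputable def bemac (x₁ x₂ : Fin 2) (u : Fin 3) : ℝ :=
  if (u : ℕ) = (x₁ : ℕ) + (x₂ : ℕ) then 1 else 0

/-- The Bernoulli(t) pmf on `{0,1}`. -/
noncomputable def bern (t : ℝ) : Fin 2 → ℝ := fun x => if x = 1 then t else 1 - t


lemma Pmat_key (r : ℝ) (hr0 : 0 < r) (hr1 : r < 1) : NonManipulable (Pmat r) := by
  intro M hbal hdiag hoff hMP
  have e0 : ∀ i : Fin 3, M i 0 * (1 - r) + M i 1 * r = 0 := by
    intro i
    have h := hMP i 0
    simpa [Pmat, Fin.sum_univ_three] using h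
  have e1 : ∀ i : Fin 3, M i 1 * (1 - r) + M i 2 * r = 0 := by
    intro i
    have h := hMP i 1
    simpa [Pmat, Fin.sum_univ_three] using h
  have h00 : M 0 0 ≤ 0 := hdiag 0
  have h01 : 0 ≤ M 0 1 := hoff 0 1 (by decide)
  have h02 : 0 ≤ M 0 2 := hoff 0 2 (by decide)
  have z02 : M 0 2 = 0 := by nlinarith [e0 0, e1 0]
  have z01 : M 0 1 = 0 := by nlinarith [e1 0]
  have z00 : M 0 0 = 0 := by nlinarith [e0 0]
  have h20 : 0 ≤ M 2 0 := hoff 2 0 (by decide)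
  have h21 : 0 ≤ M 2 1 := hoff 2 1 (by decide)
  have z20 : M 2 0 = 0 := by nlinarith [e0 2]
  have z21 : M 2 1 = 0 := by nlinarith [e0 2]
  have z22 : M 2 2 = 0 := by nlinarith [e1 2]
  have c0 := hbal 0
  rw [Fin.sum_univ_three] at c0
  have z10 : M 1 0 = 0 := by linarith
  have z11 : M 1 1 = 0 := by nlinarith [e0 1]
  have z12 : M 1 2 = 0 := by nlinarith [e1 1]
  intro i j
  fin_cases i <;> fin_cases j <;> assumption

lemma eq1 (q : ℝ) :
    (fun (u : Fin 3) (x₁ : Fin 2) => ∑ x₂, bemac x₁ x₂ u * bern q x₂) = Pmat q := by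
  funext u x
  fin_cases u <;> fin_cases x <;>
    simp [bemac, bern, Pmat, Fin.sum_univ_two]

lemma eq2 (p : ℝ) :
    (fun (u : Fin 3) (x₂ : Fin 2) => ∑ x₁, bemac x₁ x₂ u * bern p x₁) = Pmat p := by
  funext u x
  fin_cases u <;> fin_cases x <;>
    simp [bemac, bern, Pmat, Fin.sum_univ_two]

/-- for every `r ∈ (0,1)` the pair `(P_r, I)` is non-manipulable; in
particular, for the binary erasure MAC with input pmfs `P_{X₁}(1) = p`,
`P_{X₂}(1) = q` (`p, q ∈ (0,1)`) the induced observation channels are `P_q` and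
`P_p`, and both `(P_{U|X₁}, I)` and `(P_{U|X₂}, I)` are non-manipulable. -/
theorem erasure_observation_channels_nonManipulable :
    (∀ r : ℝ, 0 < r → r < 1 → NonManipulable (Pmat r)) ∧
    (∀ p q : ℝ, 0 < p → p < 1 → 0 < q → q < 1 →
      (fun (u : Fin 3) (x₁ : Fin 2) => ∑ x₂, bemac x₁ x₂ u * bern q x₂) = Pmat q ∧
      (fun (u : Fin 3) (x₂ : Fin 2) => ∑ x₁, bemac x₁ x₂ u * bern p x₁) = Pmat p ∧
      NonManipulable (fun (u : Fin 3) (x₁ : Fin 2) => ∑ x₂, bemac x₁ x₂ u * bern q x₂) ∧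
      NonManipulable (fun (u : Fin 3) (x₂ : Fin 2) => ∑ x₁, bemac x₁ x₂ u * bern p x₁)) := by
  refine ⟨fun r hr0 hr1 => Pmat_key r hr0 hr1, fun p q hp0 hp1 hq0 hq1 => ?_⟩
  refine ⟨eq1 q, eq2 p, ?_, ?_⟩
  · rw [eq1 q]; exact Pmat_key q hq0 hq1
  · rw [eq2 p]; exact Pmat_key p hp0 hp1
end

section
/- Let P be a pmf on 𝒰 × 𝒳₁ × 𝒳₂ (finite sets), let n ≥ 1, δ > 0, ε ≥ 0, and let uⁿ, vⁿ ∈ 𝒰ⁿ, x₁ⁿ ∈ 𝒳₁ⁿ, x₂ⁿ ∈ 𝒳₂ⁿ. Suppose (i) the joint type of (uⁿ, x₁ⁿ, x₂ⁿ) satisfies |P̂_{uⁿ,x₁ⁿ,x₂ⁿ}(u,x₁,x₂) − P(u,x₁,x₂)| ≤ δ for all (u,x₁,x₂), and (ii) for every u with P̂_{uⁿ}(u) > 0 and every v ∈ 𝒰, |P̂_{vⁿ|uⁿ}(v|u) − 1{v = u}| ≤ ε. Then the joint type of (vⁿ, x₁ⁿ, x₂ⁿ) satisfies |P̂_{vⁿ,x₁ⁿ,x₂ⁿ}(v,x₁,x₂)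 − P(v,x₁,x₂)| ≤ δ + 2|𝒰|ε for all (v,x₁,x₂). That is, if the empirical substitution channel from uⁿ to vⁿ is ε-close to the identity, then replacing uⁿ by vⁿ degrades joint typicality by at most 2|𝒰|ε. -/
open Finset

/-- The type (empirical pmf) of a sequence. -/
noncomputable def seqType {𝒳 : Type} [DecidableEq 𝒳] {n : ℕ}
    (x : Fin n → 𝒳) (a : 𝒳) : ℝ :=
  ((Finset.univ.filter fun i => x i = a).card : ℝ) / n

/-- The joint type (joint empirical pmf) of a pair of sequences. -/
noncomputable def jointType₂ {𝒳 𝒴 : Type} [DecidableEq 𝒳] [DecidableEq 𝒴] {n : ℕ}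
    (x : Fin n → 𝒳) (y : Fin n → 𝒴) (a : 𝒳) (b : 𝒴) : ℝ :=
  ((Finset.univ.filter fun i => x i = a ∧ y i = b).card : ℝ) / n

/-- The joint type (joint empirical pmf) of a triple of sequences. -/
noncomputable def jointType₃ {𝒳 𝒴 𝒵 : Type} [DecidableEq 𝒳] [DecidableEq 𝒴]
    [DecidableEq 𝒵] {n : ℕ}
    (x : Fin n → 𝒳) (y : Fin n → 𝒴) (z : Fin n → 𝒵) (a : 𝒳) (b : 𝒴) (c : 𝒵) : ℝ :=
  ((Finset.univ.filter fun i => x i = a ∧ y i = b ∧ z i = c).card : ℝ) / n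

/-- if `(uⁿ, x₁ⁿ, x₂ⁿ)` is `δ`-jointly typical for `P` and the empirical
substitution channel `P̂_{vⁿ|uⁿ}` is `ε`-close to the identity, then `(vⁿ, x₁ⁿ, x₂ⁿ)`
is `(δ + 2|𝒰|ε)`-jointly typical for `P`. -/
theorem joint_typicality_preserved_under_near_identity_substitution
    {𝒰 𝒳₁ 𝒳₂ : Type} [Fintype 𝒰] [Fintype 𝒳₁] [Fintype 𝒳₂]
    [DecidableEq 𝒰] [DecidableEq 𝒳₁] [DecidableEq 𝒳₂]
    (P : 𝒰 → 𝒳₁ → 𝒳₂ → ℝ) (hP : IsPMF fun t : 𝒰 × 𝒳₁ × 𝒳₂ => P t.1 t.2.1 t.2.2)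
    (n : ℕ) (hn : 1 ≤ n) (δ ε : ℝ) (hδ : 0 < δ) (hε : 0 ≤ ε)
    (u v : Fin n → 𝒰) (x₁ : Fin n → 𝒳₁) (x₂ : Fin n → 𝒳₂)
    (htyp : ∀ a b c, |jointType₃ u x₁ x₂ a b c - P a b c| ≤ δ)
    (hsub : ∀ a, 0 < seqType u a →
      ∀ b, |jointType₂ u v a b / seqType u a - (if b = a then 1 else 0)| ≤ ε) :
    ∀ a b c, |jointType₃ v x₁ x₂ a b c - P a b c| ≤ δ + 2 * Fintype.card 𝒰 * ε := by
  intro a b c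
  have hn0 : (0:ℝ) < n := by exact_mod_cast hn
  classical
  -- Per-letter bound: count of {u = a', v = a} with a' ≠ a
  have per : ∀ a' : 𝒰, a' ≠ a →
      ((univ.filter fun i : Fin n => u i = a' ∧ v i = a).card : ℝ) ≤ ε * n := by
    intro a' ha'
    by_cases hpos : 0 < seqType u a'
    · have h := hsub a' hpos a
      rw [if_neg (by exact fun h' => ha' h'.symm)] at h
      have hs1 : seqType u a' ≤ 1 := by
        unfold seqType
        rw [div_le_one hn0]
        exact_mod_cast (card_filter_le _ _).trans (le_of_eq (Finset.card_fin n))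
      have hJ : jointType₂ u v a' a / seqType u a' ≤ ε := by
        have := abs_le.mp h
        linarith [this.2]
      have hJ' : jointType₂ u v a' a ≤ ε * seqType u a' :=
        (div_le_iff₀ hpos).mp hJ
      have : jointType₂ u v a' a ≤ ε := le_trans hJ' (by nlinarith)
      unfold jointType₂ at this
      rw [div_le_iff₀ hn0] at this
      linarith
    · have hz : ((univ.filter fun i : Fin n => u i = a').card : ℝ) = 0 := by
        unfold seqType at hpos
        push_neg at hpos
        have h0 : (0:ℝ) ≤ ((univ.filter fun i : Fin n => u i = a').card : ℝ) / n := by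
          positivity
        have h' := le_antisymm hpos h0
        field_simp at h'
        simp [h']
      have hsub' : (univ.filter fun i : Fin n => u i = a' ∧ v i = a) ⊆
          (univ.filter fun i : Fin n => u i = a') := by
        intro i hi; simp only [mem_filter] at *; exact ⟨hi.1, hi.2.1⟩
      have : ((univ.filter fun i : Fin n => u i = a' ∧ v i = a).card : ℝ) ≤ 0 := by
        rw [← hz]; exact_mod_cast card_le_card hsub'
      nlinarith
  -- key2 : count of {u ≠ a, v = a} ≤ |𝒰| ε n
  have key2 : ((univ.filter fun i : Fin n => ¬ u i = a ∧ v i = a).card : ℝ) ≤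
      (Fintype.card 𝒰 : ℝ) * ε * n := by
    have hdecomp : (univ.filter fun i : Fin n => ¬ u i = a ∧ v i = a) =
        (univ.erase a).biUnion (fun a' => univ.filter fun i : Fin n => u i = a' ∧ v i = a) := by
      ext i
      simp only [mem_filter, mem_biUnion, mem_erase, mem_univ, true_and, and_true]
      constructor
      · rintro ⟨h1, h2⟩; exact ⟨u i, h1, rfl, h2⟩
      · rintro ⟨a', ha', rfl, h2⟩; exact ⟨ha', h2⟩
    have hdisj : ∀ a' ∈ univ.erase a, ∀ a'' ∈ univ.erase a, a' ≠ a'' →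
        Disjoint (univ.filter fun i : Fin n => u i = a' ∧ v i = a)
          (univ.filter fun i : Fin n => u i = a'' ∧ v i = a) := by
      intro a' _ a'' _ hne
      rw [Finset.disjoint_left]
      intro i hi hi'
      simp only [mem_filter] at hi hi'
      exact hne (hi.2.1 ▸ hi'.2.1 ▸ rfl)
    rw [hdecomp, card_biUnion hdisj]
    push_cast
    calc (∑ a' ∈ univ.erase a,
          ((univ.filter fun i : Fin n => u i = a' ∧ v i = a).card : ℝ))
        ≤ ∑ a' ∈ univ.erase a, ε * n := by
          refine Finset.sum_le_sum ?_
          intro a' ha'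
          exact per a' (mem_erase.mp ha').1
      _ = (univ.erase a).card * (ε * n) := by rw [Finset.sum_const, nsmul_eq_mul]
      _ ≤ (Fintype.card 𝒰 : ℝ) * ε * n := by
          have : ((univ.erase a).card : ℝ) ≤ (Fintype.card 𝒰 : ℝ) := by
            exact_mod_cast card_le_card (Finset.erase_subset _ _) |>.trans
              (le_of_eq (Finset.card_univ))
          nlinarith [mul_nonneg hε hn0.le]
  -- key1 : count of {u = a, v ≠ a} ≤ ε n
  have key1 : ((univ.filter fun i : Fin n => u i = a ∧ ¬ v i = a).card : ℝ) ≤ ε * n := by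
    have hsplit : ((univ.filter fun i : Fin n => u i = a).card : ℝ) =
        ((univ.filter fun i : Fin n => u i = a ∧ v i = a).card : ℝ) +
        ((univ.filter fun i : Fin n => u i = a ∧ ¬ v i = a).card : ℝ) := by
      rw [← Nat.cast_add]
      congr 1
      rw [← Finset.card_union_of_disjoint]
      · congr 1
        ext i
        simp only [mem_filter, mem_union, mem_univ, true_and]
        tauto
      · rw [Finset.disjoint_left]
        intro i hi hi'
        simp only [mem_filter, mem_univ, true_and] at hi hi'
        exact hi'.2 hi.2
    by_cases hpos : 0 < seqType u a
    · have h := hsub a hpos a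
      rw [if_pos rfl] at h
      have h2 := (abs_le.mp h).1
      have hs1 : seqType u a ≤ 1 := by
        unfold seqType
        rw [div_le_one hn0]
        exact_mod_cast (card_filter_le _ _).trans (le_of_eq (Finset.card_fin n))
      have hJ : (1 - ε) * seqType u a ≤ jointType₂ u v a a := by
        have h3 : 1 - ε ≤ jointType₂ u v a a / seqType u a := by linarith
        calc (1 - ε) * seqType u a ≤ (jointType₂ u v a a / seqType u a) * seqType u a := by
              nlinarith
          _ = jointType₂ u v a a := by field_simp
      have : seqType u a - jointType₂ u v a a ≤ ε * seqType u a := by nlinarith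
      have hfin : seqType u a - jointType₂ u v a a ≤ ε := le_trans this (by nlinarith)
      unfold seqType jointType₂ at hfin
      rw [hsplit] at hfin
      rw [div_sub_div_same, add_sub_cancel_left] at hfin
      rw [div_le_iff₀ hn0] at hfin
      linarith
    · have hz : ((univ.filter fun i : Fin n => u i = a).card : ℝ) = 0 := by
        unfold seqType at hpos
        push_neg at hpos
        have h0 : (0:ℝ) ≤ ((univ.filter fun i : Fin n => u i = a).card : ℝ) / n := by
          positivity
        have h' := le_antisymm hpos h0
        field_simp at h'
        simp [h']
      have hnn : (0:ℝ) ≤ ((univ.filter fun i : Fin n => u i = a ∧ v i = a).card : ℝ) := by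
        positivity
      nlinarith [hsplit]
  -- set-inclusion bounds between the two triple counts
  set Sv := univ.filter fun i : Fin n => v i = a ∧ x₁ i = b ∧ x₂ i = c with hSv
  set Su := univ.filter fun i : Fin n => u i = a ∧ x₁ i = b ∧ x₂ i = c with hSu
  have hub : (Sv.card : ℝ) ≤ (Su.card : ℝ) +
      ((univ.filter fun i : Fin n => ¬ u i = a ∧ v i = a).card : ℝ) := by
    have hsubset : Sv ⊆ Su ∪ (univ.filter fun i : Fin n => ¬ u i = a ∧ v i = a) := by
      intro i hi
      simp only [hSv, hSu, mem_filter, mem_union, mem_univ, true_and] at *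
      by_cases h : u i = a
      · exact Or.inl ⟨h, hi.2⟩
      · exact Or.inr ⟨h, hi.1⟩
    calc (Sv.card : ℝ) ≤ ((Su ∪ _).card : ℝ) := by exact_mod_cast card_le_card hsubset
      _ ≤ _ := by exact_mod_cast card_union_le _ _
  have hlb : (Su.card : ℝ) ≤ (Sv.card : ℝ) +
      ((univ.filter fun i : Fin n => u i = a ∧ ¬ v i = a).card : ℝ) := by
    have hsubset : Su ⊆ Sv ∪ (univ.filter fun i : Fin n => u i = a ∧ ¬ v i = a) := by
      intro i hi
      simp only [hSv, hSu, mem_filter, mem_union, mem_univ, true_and] at *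
      by_cases h : v i = a
      · exact Or.inl ⟨h, hi.2⟩
      · exact Or.inr ⟨hi.1, h⟩
    calc (Su.card : ℝ) ≤ ((Sv ∪ _).card : ℝ) := by exact_mod_cast card_le_card hsubset
      _ ≤ _ := by exact_mod_cast card_union_le _ _
  -- conclude
  have hcard1 : (1:ℝ) ≤ (Fintype.card 𝒰 : ℝ) := by
    have : Nonempty 𝒰 := ⟨u ⟨0, hn⟩⟩
    exact_mod_cast Fintype.card_pos
  have htyp' := abs_le.mp (htyp a b c)
  unfold jointType₃ at htyp' ⊢
  rw [abs_le]
  constructor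
  · -- lower bound: P - Sv/n ≤ δ + ε ≤ δ + 2|𝒰|ε
    have : (Su.card : ℝ) / n ≤ (Sv.card : ℝ) / n + ε := by
      rw [div_add' _ _ _ (ne_of_gt hn0), div_le_div_iff₀ hn0 hn0]
      nlinarith [hlb, key1]
    have h1 := htyp'.1
    have h4 : ε ≤ (Fintype.card 𝒰 : ℝ) * ε := le_mul_of_one_le_left hε hcard1
    have h5 : (0:ℝ) ≤ (Fintype.card 𝒰 : ℝ) * ε := le_trans hε h4
    linarith
  · have : (Sv.card : ℝ) / n ≤ (Su.card : ℝ) / n + (Fintype.card 𝒰 : ℝ) * ε := by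
      rw [div_add' _ _ _ (ne_of_gt hn0), div_le_div_iff₀ hn0 hn0]
      nlinarith [hub, key2]
    have h2 := htyp'.2
    have h5 : (0:ℝ) ≤ (Fintype.card 𝒰 : ℝ) * ε :=
      mul_nonneg (by positivity) hε
    linarith
end

section
/- Let 𝒰 and 𝒳₁ be finite sets, let Q(x₁|u) be a conditional pmf on 𝒳₁ given 𝒰, let μ̃ > 0, n ≥ 1, and let uⁿ, vⁿ ∈ 𝒰ⁿ. Define S = { x₁ⁿ ∈ 𝒳₁ⁿ : |P̂_{x₁ⁿ|uⁿ}(x₁|u) − Q(x₁|u)| ≤ μ̃ for all x₁ and all u with P̂_{uⁿ}(u) > 0, and |P̂_{x₁ⁿ|vⁿ}(x₁|v) − Q(x₁|v)| ≤ μ̃ for all x₁ and all v with P̂_{vⁿ}(v) > 0 }. Then |S| ≤ (n+1)^{|𝒳₁||𝒰|²} · 2^{n H*}, where H* is the maximum of H(X̃₁ | Ũ, Ṽ) over all joint pmfs of finite random variables (X̃₁, Ũ, Ṽ), with X̃₁ valued in 𝒳₁ and Ũ, Ṽ valued in 𝒰, such that P_{Ũ,Ṽ} equals the joint type P̂_{uⁿ,vⁿ},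 |P_{X̃₁|Ũ}(x₁|u) − Q(x₁|u)| ≤ μ̃ and |P_{X̃₁|Ṽ}(x₁|v) − Q(x₁|v)| ≤ μ̃ wherever defined (H* = 0 if no such pmf exists, in which case S is empty). -/
open Finset
open scoped Classical

/-- Shannon entropy (base 2) of a pmf. -/
noncomputable def ent {α : Type} [Fintype α] (p : α → ℝ) : ℝ :=
  -∑ a, p a * Real.logb 2 (p a)

/-- Conditional entropy H(A | B, C) (base 2) for the joint pmf `p a b c`. -/
noncomputable def condEnt3 {α β γ : Type} [Fintype α] [Fintype β] [Fintype γ]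
    (p : α → β → γ → ℝ) : ℝ :=
  (ent fun t : α × β × γ => p t.1 t.2.1 t.2.2) - ent fun t : β × γ => ∑ a, p a t.1 t.2

/-! Method of types. The joint type of any `x ∈ S` with `(uⁿ, vⁿ)` is itself one of the pmfs
competing for `H*`, and there are at most `(n+1)^{|𝒳₁||𝒰|²}` joint types. The sequences sharing
a joint type `P` all have the same probability `2^{-n H_P(X̃₁|Ũ,Ṽ)}` under the memoryless
channel `∏ᵢ P(xᵢ | uᵢ, vᵢ)`, whose total mass is one, so there are at most
`2^{n H_P} ≤ 2^{n H*}` of them. -/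

open Real

lemma Finset.card_le_card_image_mul_of_card_fiber_le {ι κ : Type*} [DecidableEq κ]
    (s : Finset ι) (f : ι → κ) {B : ℝ} (hB : ∀ k ∈ s.image f, (#{i ∈ s | f i = k} : ℝ) ≤ B) :
    (#s : ℝ) ≤ #(s.image f) * B := by
  rw [Finset.card_eq_sum_card_image f s]
  push_cast
  exact (Finset.sum_le_card_nsmul _ _ _ hB).trans_eq (nsmul_eq_mul _ _)

section Entropy

variable {α : Type} [Fintype α]

lemma ent_eq_sum_negMulLog (p : α → ℝ) : ent p = (∑ a, negMulLog (p a)) / log 2 := by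
  simp only [ent, negMulLog, logb, Finset.sum_div]
  rw [← Finset.sum_neg_distrib]
  congr 1 with a
  ring

lemma IsPMF.le_one {p : α → ℝ} (hp : IsPMF p) (a : α) : p a ≤ 1 :=
  hp.2 ▸ Finset.single_le_sum (fun b _ => hp.1 b) (Finset.mem_univ a)

lemma IsPMF.ent_nonneg {p : α → ℝ} (hp : IsPMF p) : 0 ≤ ent p := by
  rw [ent_eq_sum_negMulLog]
  exact div_nonneg (Finset.sum_nonneg fun a _ => negMulLog_nonneg (hp.1 a) (hp.le_one a))
    (log_nonneg one_le_two)

lemma ent_le_card_div_log_two {p : α → ℝ} (hp : ∀ a, 0 ≤ p a) :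
    ent p ≤ Fintype.card α / log 2 := by
  rw [ent_eq_sum_negMulLog]
  gcongr
  calc ∑ a, negMulLog (p a) ≤ ∑ _a : α, (1 : ℝ) :=
        Finset.sum_le_sum fun a _ => (negMulLog_le_one_sub_self (hp a)).trans (by linarith [hp a])
    _ = Fintype.card α := by simp

lemma IsPMF.sum_fst {β : Type} [Fintype β] {q : α × β → ℝ} (hq : IsPMF q) :
    IsPMF fun b => ∑ a, q (a, b) :=
  ⟨fun b => Finset.sum_nonneg fun a _ => hq.1 _, by
    rw [Finset.sum_comm, ← hq.2, Fintype.sum_prod_type]⟩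

lemma condEnt3_le_card_div_log_two {β γ : Type} [Fintype β] [Fintype γ] {p : α → β → γ → ℝ}
    (hp : IsPMF fun t : α × β × γ => p t.1 t.2.1 t.2.2) :
    condEnt3 p ≤ Fintype.card (α × β × γ) / log 2 := by
  have h_joint := ent_le_card_div_log_two hp.1
  have h_marginal := hp.sum_fst.ent_nonneg
  unfold condEnt3
  linarith

end Entropy

section SequenceTypes

variable {α β γ : Type} [DecidableEq α] [DecidableEq β] [DecidableEq γ] {n : ℕ}

lemma seqType_nonneg (x : Fin n → α) (a : α) : 0 ≤ seqType x a := by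
  unfold seqType; positivity

lemma seqType_apply_pos (x : Fin n → α) (i : Fin n) : 0 < seqType x (x i) := by
  have hi : i ∈ Finset.univ.filter fun j => x j = x i := by simp
  exact div_pos (by exact_mod_cast Finset.card_pos.mpr ⟨i, hi⟩) (by exact_mod_cast i.pos)

lemma sum_comp_eq_mul_sum_seqType [Fintype α] (x : Fin n → α) (f : α → ℝ) :
    ∑ i, f (x i) = n * ∑ a, seqType x a * f a := by
  rcases Nat.eq_zero_or_pos n with rfl | hn
  · simp
  rw [← Finset.sum_fiberwise' Finset.univ x f, Finset.mul_sum]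
  refine Finset.sum_congr rfl fun a _ => ?_
  rw [Finset.sum_const, nsmul_eq_mul, seqType]
  field_simp

lemma isPMF_seqType [Fintype α] (hn : n ≠ 0) (x : Fin n → α) : IsPMF (seqType x) := by
  refine ⟨seqType_nonneg x, ?_⟩
  have := sum_comp_eq_mul_sum_seqType x fun _ => 1
  simp only [mul_one, Finset.sum_const, Finset.card_univ, Fintype.card_fin, nsmul_eq_mul] at this
  exact (mul_right_eq_self₀.mp this.symm).resolve_right (by exact_mod_cast hn)

lemma prod_seqType_apply [Fintype α] (x : Fin n → α) :
    ∏ i, seqType x (x i) = (2 : ℝ) ^ (-(n * ent (seqType x))) := by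
  calc ∏ i, seqType x (x i) = ∏ i, exp (log (seqType x (x i))) :=
        Finset.prod_congr rfl fun i _ => (exp_log (seqType_apply_pos x i)).symm
    _ = exp (∑ i, log (seqType x (x i))) := (exp_sum _ _).symm
    _ = exp (log 2 * -(n * ent (seqType x))) := by
        rw [sum_comp_eq_mul_sum_seqType x fun a => log (seqType x a), ent_eq_sum_negMulLog,
          mul_neg, mul_left_comm, mul_div_cancel₀ _ (log_pos one_lt_two).ne']
        simp [negMulLog]
    _ = (2 : ℝ) ^ (-(n * ent (seqType x))) := (rpow_def_of_pos two_pos _).symm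

lemma card_image_seqType_le [Fintype α] (s : Finset (Fin n → α)) :
    #(s.image seqType) ≤ (n + 1) ^ Fintype.card α := by
  have hsub : s.image seqType
      ⊆ Finset.univ.image fun (c : α → Fin (n + 1)) a => (c a : ℝ) / n := by
    intro p hp
    obtain ⟨x, -, rfl⟩ := Finset.mem_image.mp hp
    refine Finset.mem_image.mpr
      ⟨fun a => ⟨#{i | x i = a}, Nat.lt_succ_of_le ?_⟩, Finset.mem_univ _, rfl⟩
    exact (Finset.card_filter_le _ _).trans_eq (Finset.card_fin n)
  calc #(s.image seqType) ≤ #(Finset.univ : Finset (α → Fin (n + 1))) :=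
        (Finset.card_le_card hsub).trans Finset.card_image_le
    _ = (n + 1) ^ Fintype.card α := by simp

end SequenceTypes

section JointTypes

variable {α β γ : Type} [DecidableEq α] [DecidableEq β] [DecidableEq γ] {n : ℕ}

lemma jointType₂_eq_seqType (x : Fin n → α) (y : Fin n → β) (a : α) (b : β) :
    jointType₂ x y a b = seqType (fun i => (x i, y i)) (a, b) := by
  simp only [jointType₂, seqType, Prod.mk.injEq]

lemma jointType₃_eq_seqType (x : Fin n → α) (u : Fin n → β) (v : Fin n → γ) (a : α) (b : β)
    (c : γ) : jointType₃ x u v a b c = seqType (fun i => (x i, u i, v i)) (a, b, c) := by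
  simp only [jointType₃, seqType, Prod.mk.injEq]

lemma uncurry_jointType₃ (x : Fin n → α) (u : Fin n → β) (v : Fin n → γ) :
    (fun t : α × β × γ => jointType₃ x u v t.1 t.2.1 t.2.2)
      = seqType fun i => (x i, u i, v i) :=
  funext fun _ => jointType₃_eq_seqType _ _ _ _ _ _

lemma sum_card_filter_eq_and_div [Fintype α] (f : Fin n → α) (p : Fin n → Prop)
    [DecidablePred p] : ∑ a, (#{i | f i = a ∧ p i} : ℝ) / n = #{i | p i} / n := by
  rw [← Finset.sum_div]
  congr 1
  norm_cast
  rw [Finset.card_eq_sum_card_fiberwise fun i _ => Finset.mem_univ (f i)]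
  simp only [Finset.filter_filter, and_comm]

lemma sum_jointType₂_left [Fintype α] (x : Fin n → α) (y : Fin n → β) (b : β) :
    ∑ a, jointType₂ x y a b = seqType y b :=
  sum_card_filter_eq_and_div x fun i => y i = b

lemma sum_jointType₃_left [Fintype α] (x : Fin n → α) (u : Fin n → β) (v : Fin n → γ)
    (b : β) (c : γ) :
    ∑ a, jointType₃ x u v a b c = jointType₂ u v b c :=
  sum_card_filter_eq_and_div x fun i => u i = b ∧ v i = c

lemma sum_jointType₃_mid [Fintype β] (x : Fin n → α) (u : Fin n → β) (v : Fin n → γ)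
    (a : α) (c : γ) :
    ∑ b, jointType₃ x u v a b c = jointType₂ x v a c := by
  simp only [jointType₃, jointType₂, and_left_comm (a := x _ = a)]
  exact sum_card_filter_eq_and_div u fun i => x i = a ∧ v i = c

lemma sum_jointType₃_right [Fintype γ] (x : Fin n → α) (u : Fin n → β) (v : Fin n → γ)
    (a : α) (b : β) :
    ∑ c, jointType₃ x u v a b c = jointType₂ x u a b := by
  simp only [jointType₃, jointType₂, ← and_assoc, and_comm (b := v _ = _)]
  simp only [and_assoc]
  exact sum_card_filter_eq_and_div v fun i => x i = a ∧ u i = b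

end JointTypes

section TypeClasses

variable {α β γ : Type} [Fintype α] [Fintype β] [Fintype γ]
  [DecidableEq α] [DecidableEq β] [DecidableEq γ] {n : ℕ}

lemma isPMF_jointType₃ (hn : n ≠ 0) (x : Fin n → α) (u : Fin n → β) (v : Fin n → γ) :
    IsPMF fun t : α × β × γ => jointType₃ x u v t.1 t.2.1 t.2.2 :=
  uncurry_jointType₃ x u v ▸ isPMF_seqType hn _

lemma condEnt3_jointType₃ (x : Fin n → α) (u : Fin n → β) (v : Fin n → γ) :
    condEnt3 (jointType₃ x u v)
      = ent (seqType fun i => (x i, u i, v i)) - ent (seqType fun i => (u i, v i)) := by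
  simp only [condEnt3, uncurry_jointType₃, sum_jointType₃_left, jointType₂_eq_seqType]

lemma prod_jointType₃_div_jointType₂ (x : Fin n → α) (u : Fin n → β) (v : Fin n → γ) :
    ∏ i, jointType₃ x u v (x i) (u i) (v i) / jointType₂ u v (u i) (v i)
      = (2 : ℝ) ^ (-(n * condEnt3 (jointType₃ x u v))) := by
  simp only [Finset.prod_div_distrib, jointType₃_eq_seqType, jointType₂_eq_seqType,
    condEnt3_jointType₃]
  rw [prod_seqType_apply (fun i => (x i, u i, v i)), prod_seqType_apply (fun i => (u i, v i)),
    ← rpow_sub two_pos]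
  ring_nf

theorem card_jointType₃_class_le (x : Fin n → α) (u : Fin n → β) (v : Fin n → γ) :
    (#{y | jointType₃ y u v = jointType₃ x u v} : ℝ)
      ≤ (2 : ℝ) ^ (n * condEnt3 (jointType₃ x u v)) := by
  set P := jointType₃ x u v
  let weight (y : Fin n → α) : ℝ := ∏ i, P (y i) (u i) (v i) / jointType₂ u v (u i) (v i)
  have weight_nonneg (y : Fin n → α) : 0 ≤ weight y :=
    Finset.prod_nonneg fun i _ => div_nonneg (by unfold P jointType₃; positivity)
      (by unfold jointType₂; positivity)
  have sum_weight : ∑ y, weight y = 1 := by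
    refine (Fintype.prod_sum fun i a => P a (u i) (v i) / jointType₂ u v (u i) (v i)).symm.trans
      (Finset.prod_eq_one fun i _ => ?_)
    rw [← Finset.sum_div, sum_jointType₃_left, div_self]
    exact (jointType₂_eq_seqType u v _ _ ▸ seqType_apply_pos (fun i => (u i, v i)) i).ne'
  have weight_eq {y} (hy : y ∈ ({y | jointType₃ y u v = P} : Finset _)) :
      weight y = (2 : ℝ) ^ (-(n * condEnt3 P)) := by
    simp only [weight]
    rw [← (Finset.mem_filter.mp hy).2]
    exact prod_jointType₃_div_jointType₂ y u v
  have key : (#{y | jointType₃ y u v = P} : ℝ) * (2 : ℝ) ^ (-(n * condEnt3 P)) ≤ 1 :=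
    calc _ = ∑ y ∈ {y | jointType₃ y u v = P}, weight y := by
          rw [Finset.sum_congr rfl fun y hy => weight_eq hy, Finset.sum_const, nsmul_eq_mul]
      _ ≤ ∑ y, weight y := Finset.sum_le_sum_of_subset_of_nonneg (Finset.subset_univ _)
          fun y _ _ => weight_nonneg y
      _ = 1 := sum_weight
  rwa [rpow_neg zero_le_two, ← div_eq_mul_inv, div_le_one (rpow_pos_of_pos two_pos _)] at key

lemma card_image_jointType₃_le (s : Finset (Fin n → α)) (u : Fin n → β) (v : Fin n → γ) :
    #(s.image fun x => jointType₃ x u v)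
      ≤ (n + 1) ^ (Fintype.card α * Fintype.card β * Fintype.card γ) := by
  have hfactor : (fun x => jointType₃ x u v)
      = (fun (p : α × β × γ → ℝ) a b c => p (a, b, c)) ∘ seqType
          ∘ fun x i => (x i, u i, v i) := by
    funext x a b c
    exact jointType₃_eq_seqType x u v a b c
  rw [hfactor, ← Finset.image_image, ← Finset.image_image]
  calc _ ≤ #((s.image fun x i => (x i, u i, v i)).image seqType) := Finset.card_image_le
    _ ≤ _ := card_image_seqType_le _
    _ = _ := by simp only [Fintype.card_prod, mul_assoc]

end TypeClasses

theorem card_doubly_conditionally_typical_bound_general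
    {𝒰 𝒳₁ : Type} [Fintype 𝒰] [Fintype 𝒳₁] [DecidableEq 𝒰] [DecidableEq 𝒳₁]
    (Q : 𝒰 → 𝒳₁ → ℝ)
    (μt : ℝ) (n : ℕ) (hn : 1 ≤ n) (u v : Fin n → 𝒰) :
    let S : Finset (Fin n → 𝒳₁) := Finset.univ.filter fun x =>
      (∀ b a, 0 < seqType u a → |jointType₂ x u b a / seqType u a - Q a b| ≤ μt) ∧
      (∀ b a, 0 < seqType v a → |jointType₂ x v b a / seqType v a - Q a b| ≤ μt)
    let E : Set ℝ := { h | ∃ pt : 𝒳₁ → 𝒰 → 𝒰 → ℝ,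
      (IsPMF fun t : 𝒳₁ × 𝒰 × 𝒰 => pt t.1 t.2.1 t.2.2) ∧
      (∀ a b, ∑ x, pt x a b = jointType₂ u v a b) ∧
      (∀ x a, 0 < (∑ x', ∑ b, pt x' a b) →
        |(∑ b, pt x a b) / (∑ x', ∑ b, pt x' a b) - Q a x| ≤ μt) ∧
      (∀ x b, 0 < (∑ x', ∑ a, pt x' a b) →
        |(∑ a, pt x a b) / (∑ x', ∑ a, pt x' a b) - Q b x| ≤ μt) ∧
      h = condEnt3 pt }
    (E = ∅ → S = ∅) ∧
    (S.card : ℝ) ≤ ((n : ℝ) + 1) ^ (Fintype.card 𝒳₁ * Fintype.card 𝒰 ^ 2)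
        * (2 : ℝ) ^ ((n : ℝ) * sSup E) := by
  intro S E
  have type_mem : ∀ x ∈ S, condEnt3 (jointType₃ x u v) ∈ E := by
    intro x hx
    obtain ⟨hu, hv⟩ := (Finset.mem_filter.mp hx).2
    refine ⟨_, isPMF_jointType₃ (by omega) x u v, sum_jointType₃_left x u v,
      fun c a => ?_, fun c b => ?_, rfl⟩
    · simpa only [sum_jointType₃_right, sum_jointType₂_left] using hu c a
    · simpa only [sum_jointType₃_mid, sum_jointType₂_left] using hv c b
  have E_bdd : BddAbove E := by
    refine ⟨Fintype.card (𝒳₁ × 𝒰 × 𝒰) / log 2, ?_⟩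
    rintro h ⟨pt, hpt, -, -, -, rfl⟩
    exact condEnt3_le_card_div_log_two hpt
  refine ⟨fun hE => Finset.eq_empty_of_forall_notMem fun x hx =>
    (hE ▸ type_mem x hx : _ ∈ (∅ : Set ℝ)), ?_⟩
  calc (#S : ℝ) ≤ #(S.image fun x => jointType₃ x u v) * (2 : ℝ) ^ ((n : ℝ) * sSup E) := by
        refine Finset.card_le_card_image_mul_of_card_fiber_le S _ fun P hP => ?_
        obtain ⟨x, hx, rfl⟩ := Finset.mem_image.mp hP
        calc (#{y ∈ S | jointType₃ y u v = jointType₃ x u v} : ℝ)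
            ≤ #{y | jointType₃ y u v = jointType₃ x u v} := by
              gcongr
              exact Finset.subset_univ S
          _ ≤ (2 : ℝ) ^ (n * condEnt3 (jointType₃ x u v)) := card_jointType₃_class_le x u v
          _ ≤ (2 : ℝ) ^ ((n : ℝ) * sSup E) := by
              gcongr
              · exact one_le_two
              · exact le_csSup E_bdd (type_mem x hx)
    _ ≤ _ := by
        gcongr
        exact_mod_cast (card_image_jointType₃_le S u v).trans_eq (by ring)

/-- the set `S` of sequences `x₁ⁿ` whose conditional types given `uⁿ`
and given `vⁿ` are both `μ̃`-close to `Q` has size at most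
`(n+1)^{|𝒳₁||𝒰|²} 2^{n H*}`, where `H*` is the supremum of `H(X̃₁|Ũ,Ṽ)` over all
joint pmfs matching the joint type of `(uⁿ, vⁿ)` whose backward channels are
`μ̃`-close to `Q` (with `H* = 0` when no such pmf exists, in which case `S` is
empty). -/
theorem card_doubly_conditionally_typical_bound
    {𝒰 𝒳₁ : Type} [Fintype 𝒰] [Fintype 𝒳₁] [DecidableEq 𝒰] [DecidableEq 𝒳₁]
    (Q : 𝒰 → 𝒳₁ → ℝ) (hQ : ∀ u, IsPMF (Q u))
    (μt : ℝ) (hμt : 0 < μt) (n : ℕ) (hn : 1 ≤ n) (u v : Fin n → 𝒰) :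
    let S : Finset (Fin n → 𝒳₁) := Finset.univ.filter fun x =>
      (∀ b a, 0 < seqType u a → |jointType₂ x u b a / seqType u a - Q a b| ≤ μt) ∧
      (∀ b a, 0 < seqType v a → |jointType₂ x v b a / seqType v a - Q a b| ≤ μt)
    let E : Set ℝ := { h | ∃ pt : 𝒳₁ → 𝒰 → 𝒰 → ℝ,
      (IsPMF fun t : 𝒳₁ × 𝒰 × 𝒰 => pt t.1 t.2.1 t.2.2) ∧
      (∀ a b, ∑ x, pt x a b = jointType₂ u v a b) ∧
      (∀ x a, 0 < (∑ x', ∑ b, pt x' a b) →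
        |(∑ b, pt x a b) / (∑ x', ∑ b, pt x' a b) - Q a x| ≤ μt) ∧
      (∀ x b, 0 < (∑ x', ∑ a, pt x' a b) →
        |(∑ a, pt x a b) / (∑ x', ∑ a, pt x' a b) - Q b x| ≤ μt) ∧
      h = condEnt3 pt }
    (E = ∅ → S = ∅) ∧
    (S.card : ℝ) ≤ ((n : ℝ) + 1) ^ (Fintype.card 𝒳₁ * Fintype.card 𝒰 ^ 2)
        * (2 : ℝ) ^ ((n : ℝ) * sSup E) :=
  card_doubly_conditionally_typical_bound_general Q μt n hn u v
end

section
/- Consider finite alphabets 𝒳₁, 𝒳₂, 𝒰, a discrete memoryless MAC W(u|x₁,x₂), and the two-way relay model in which both nodes observe the relay's output sequence Vⁿ perfectly, with an honest relay (Vⁿ = Uⁿ). Let P_{X₁}, P_{X₂} be any input pmfs and (X₁,X₂,U) ~ P_{X₁}P_{X₂}W. Then for every rate pair with 0 < R₁ < I(X₁; U | X₂) and 0 < R₂ < I(X₂; U | X₁), there exists a sequence of block-length-n codes (encoders f₁ⁿ, f₂ⁿ; decoders g₁ⁿ, g₂ⁿ) of rates (R₁,R₂) such that Pr{ g₁ⁿ(Uⁿ,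 W₁) ≠ W₂ or g₂ⁿ(Uⁿ, W₂) ≠ W₁ } → 0 as n → ∞, where W₁, W₂ are independent uniform messages, X₁ⁿ = f₁ⁿ(W₁), X₂ⁿ = f₂ⁿ(W₂), and Uⁿ is the MAC output. -/
open Finset Filter Topology

/-- Conditional mutual information I(A;B|C) (base 2) for the joint pmf `p a b c`. -/
noncomputable def condMI {α β γ : Type} [Fintype α] [Fintype β] [Fintype γ]
    (p : α → β → γ → ℝ) : ℝ :=
  (ent fun ac : α × γ => ∑ b, p ac.1 b ac.2)
    + (ent fun bc : β × γ => ∑ a, p a bc.1 bc.2)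
    - (ent fun abc : α × β × γ => p abc.1 abc.2.1 abc.2.2)
    - ent fun c : γ => ∑ a, ∑ b, p a b c

/-- Number of messages for block length `n` and rate `R`. -/
noncomputable def nMsg (n : ℕ) (R : ℝ) : ℕ := 2 ^ ⌈(n : ℝ) * R⌉₊

/-- Memoryless extension of the MAC `W` over `n` channel uses. -/
noncomputable def Wn {𝒳₁ 𝒳₂ 𝒰 : Type} (W : 𝒳₁ → 𝒳₂ → 𝒰 → ℝ) {n : ℕ}
    (x₁ : Fin n → 𝒳₁) (x₂ : Fin n → 𝒳₂) (u : Fin n → 𝒰) : ℝ :=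
  ∏ i, W (x₁ i) (x₂ i) (u i)

/-- A code of block length `n` and rates `(R₁, R₂)`: encoders map messages to
codewords, decoders output a message of the other node or `none` (the symbol `!`). -/
structure DetCode (𝒳₁ 𝒳₂ 𝒰 : Type) (n : ℕ) (R₁ R₂ : ℝ) where
  enc₁ : Fin (nMsg n R₁) → Fin n → 𝒳₁
  enc₂ : Fin (nMsg n R₂) → Fin n → 𝒳₂
  dec₁ : (Fin n → 𝒰) → Fin (nMsg n R₁) → Option (Fin (nMsg n R₂))
  dec₂ : (Fin n → 𝒰) → Fin (nMsg n R₂) → Option (Fin (nMsg n R₁))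

/-- Probability that either node decodes the other node's message incorrectly,
with independent uniform messages and an honest relay (`Vⁿ = Uⁿ`). -/
noncomputable def detErrProb {𝒳₁ 𝒳₂ 𝒰 : Type} [Fintype 𝒰]
    (W : 𝒳₁ → 𝒳₂ → 𝒰 → ℝ) {n : ℕ} {R₁ R₂ : ℝ} (C : DetCode 𝒳₁ 𝒳₂ 𝒰 n R₁ R₂) : ℝ :=
  ((nMsg n R₁ : ℝ) * (nMsg n R₂ : ℝ))⁻¹ *
    ∑ w₁, ∑ w₂, ∑ u : Fin n → 𝒰,
      Wn W (C.enc₁ w₁) (C.enc₂ w₂) u *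
        (if C.dec₁ u w₁ ≠ some w₂ ∨ C.dec₂ u w₂ ≠ some w₁ then 1 else 0)


set_option maxHeartbeats 2000000

namespace MacAux
open scoped Classical


variable {σ : Type} [Fintype σ]

noncomputable def Exp (p f : σ → ℝ) : ℝ := ∑ a, p a * f a

noncomputable def pn (p : σ → ℝ) (n : ℕ) : (Fin n → σ) → ℝ := fun x => ∏ i, p (x i)

lemma pn_nonneg {p : σ → ℝ} (hp : ∀ a, 0 ≤ p a) {n : ℕ} (x : Fin n → σ) : 0 ≤ pn p n x :=
  Finset.prod_nonneg fun i _ => hp (x i)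

lemma pn_sum {p : σ → ℝ} (hp : ∑ a, p a = 1) (n : ℕ) : ∑ x : Fin n → σ, pn p n x = 1 := by
  unfold pn
  rw [← Fintype.prod_sum fun (_ : Fin n) (a : σ) => p a]
  simp [hp]

/-- splitting a product over functions -/
lemma sum_fn_prod {ι : Type} [Fintype ι] [DecidableEq ι] (G : ι → σ → ℝ) :
    ∑ c : ι → σ, ∏ i, G i (c i) = ∏ i, ∑ a, G i a := (Fintype.prod_sum G).symm

lemma sum_pi_single {p : σ → ℝ} (hp : ∑ a, p a = 1) {ι : Type} [Fintype ι] [DecidableEq ι]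
    (i : ι) (f : σ → ℝ) :
    ∑ c : ι → σ, (∏ j, p (c j)) * f (c i) = Exp p f := by
  have : ∀ c : ι → σ, (∏ j, p (c j)) * f (c i)
      = ∏ j, (fun j a => p a * (if j = i then f a else 1)) j (c j) := by
    intro c
    rw [Finset.prod_mul_distrib]
    congr 1
    rw [Finset.prod_eq_single i (by intro b _ hb; simp [hb]) (by simp)]
    simp
  calc ∑ c : ι → σ, (∏ j, p (c j)) * f (c i)
      = ∑ c : ι → σ, ∏ j, (fun j a => p a * (if j = i then f a else 1)) j (c j) :=
        Finset.sum_congr rfl fun c _ => this c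
    _ = ∏ j, ∑ a, (fun j a => p a * (if j = i then f a else 1)) j a := sum_fn_prod (fun j a => p a * (if j = i then f a else 1))
    _ = Exp p f := by
        rw [Finset.prod_eq_single i (by intro b _ hb; simp [hb, hp]) (by simp)]
        simp [Exp]

lemma sum_pi_pair {p : σ → ℝ} (hp : ∑ a, p a = 1) {ι : Type} [Fintype ι] [DecidableEq ι]
    {i j : ι} (hij : i ≠ j) (f g : σ → ℝ) :
    ∑ c : ι → σ, (∏ k, p (c k)) * (f (c i) * g (c j)) = Exp p f * Exp p g := by
  have : ∀ c : ι → σ, (∏ k, p (c k)) * (f (c i) * g (c j))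
      = ∏ k, (fun k a => p a * (if k = i then f a else if k = j then g a else 1)) k (c k) := by
    intro c
    rw [Finset.prod_mul_distrib]
    congr 1
    have hsub : ({i, j} : Finset ι) ⊆ Finset.univ := Finset.subset_univ _
    rw [← Finset.prod_subset hsub (by intro b _ hb; simp at hb; simp [hb.1, hb.2])]
    rw [Finset.prod_pair hij]
    simp [hij, hij.symm]
  calc ∑ c : ι → σ, (∏ k, p (c k)) * (f (c i) * g (c j))
      = ∑ c : ι → σ, ∏ k, (fun k a => p a * (if k = i then f a else if k = j then g a else 1)) k (c k) :=
        Finset.sum_congr rfl fun c _ => this c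
    _ = ∏ k, ∑ a, (fun k a => p a * (if k = i then f a else if k = j then g a else 1)) k a := sum_fn_prod (fun k a => p a * (if k = i then f a else if k = j then g a else 1))
    _ = Exp p f * Exp p g := by
        have hsub2 : ({i, j} : Finset ι) ⊆ Finset.univ := Finset.subset_univ _
        rw [← Finset.prod_subset hsub2 (by intro b _ hb; simp at hb; simp [hb.1, hb.2, hp])]
        rw [Finset.prod_pair hij]
        simp [hij, hij.symm, Exp]


lemma pn_def {σ : Type} [Fintype σ] (p : σ → ℝ) (n : ℕ) (x : Fin n → σ) : pn p n x = ∏ i, p (x i) := rfl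

lemma pn_nonneg' {σ : Type} [Fintype σ] {p : σ → ℝ} (hp : ∀ a, 0 ≤ p a) {n : ℕ} (x : Fin n → σ) : 0 ≤ pn p n x :=
  Finset.prod_nonneg fun i _ => hp (x i)

noncomputable def Var {σ : Type} [Fintype σ] (p f : σ → ℝ) : ℝ := Exp p (fun a => (f a - Exp p f)^2)




lemma var_nonneg {p f : σ → ℝ} (hp : ∀ a, 0 ≤ p a) : 0 ≤ Var p f :=
  Finset.sum_nonneg fun a _ => mul_nonneg (hp a) (sq_nonneg _)

lemma exp_centered {p f : σ → ℝ} (hp1 : ∑ a, p a = 1) : Exp p (fun a => f a - Exp p f) = 0 := by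
  simp only [Exp, mul_sub, Finset.sum_sub_distrib, ← Finset.sum_mul, hp1, one_mul, sub_self]

lemma second_moment {p : σ → ℝ} (hp1 : ∑ a, p a = 1) (n : ℕ) (f : σ → ℝ) :
    ∑ x : Fin n → σ, pn p n x * (∑ i, f (x i) - n * Exp p f)^2 = n * Var p f := by
  have key : ∀ i j : Fin n, (∑ x : Fin n → σ, (∏ k, p (x k)) * ((f (x i) - (Exp p f)) * (f (x j) - (Exp p f))))
      = if i = j then Var p f else 0 := by
    intro i j
    by_cases h : i = j
    · subst h
      rw [if_pos rfl, Var, ← sum_pi_single hp1 i (fun a => (f a - Exp p f)^2)]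
      exact Finset.sum_congr rfl fun x _ => by rw [sq]
    · rw [if_neg h, sum_pi_pair hp1 h (fun a => f a - Exp p f) (fun a => f a - Exp p f), exp_centered hp1, zero_mul]
  calc ∑ x : Fin n → σ, pn p n x * (∑ i, f (x i) - n * (Exp p f))^2
      = ∑ x : Fin n → σ, ∑ i, ∑ j, (∏ k, p (x k)) * ((f (x i) - (Exp p f)) * (f (x j) - (Exp p f))) := by
        refine Finset.sum_congr rfl fun x _ => ?_
        have h1 : (∑ i, f (x i)) - n * (Exp p f) = ∑ i, (f (x i) - (Exp p f)) := by
          rw [Finset.sum_sub_distrib]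
          simp [Finset.card_univ]
        rw [pn_def, h1, sq, Finset.sum_mul_sum]
        simp_rw [Finset.mul_sum]
    _ = ∑ i, ∑ j : Fin n, ∑ x : Fin n → σ, (∏ k, p (x k)) * ((f (x i) - (Exp p f)) * (f (x j) - (Exp p f))) := by
        rw [Finset.sum_comm]
        exact Finset.sum_congr rfl fun i _ => Finset.sum_comm
    _ = ∑ i : Fin n, ∑ j : Fin n, if i = j then Var p f else 0 := by
        exact Finset.sum_congr rfl fun i _ => Finset.sum_congr rfl fun j _ => key i j
    _ = n * Var p f := by simp [Finset.sum_ite_eq, Finset.card_univ]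

lemma cheb {p : σ → ℝ} (hp0 : ∀ a, 0 ≤ p a) (hp1 : ∑ a, p a = 1) (f : σ → ℝ) {τ : ℝ}
    (hτ : τ < Exp p f) {n : ℕ} (hn : 1 ≤ n) :
    ∑ x : Fin n → σ, pn p n x * (if (∑ i, f (x i)) ≤ n * τ then 1 else 0)
      ≤ Var p f / ((n : ℝ) * (Exp p f - τ)^2) := by
  set μ := Exp p f with hμ
  set δ := μ - τ with hδ
  have hδ0 : 0 < δ := by simp [hδ, hτ]
  have hn0 : (0:ℝ) < n := by exact_mod_cast hn
  have hden : (0:ℝ) < ((n:ℝ) * δ)^2 := by positivity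
  have pointwise : ∀ x : Fin n → σ, pn p n x * (if (∑ i, f (x i)) ≤ n * τ then 1 else 0)
      ≤ pn p n x * ((∑ i, f (x i) - n * μ)^2 / ((n:ℝ) * δ)^2) := by
    intro x
    have hpn : 0 ≤ pn p n x := by rw [pn_def]; exact Finset.prod_nonneg fun i _ => hp0 _
    refine mul_le_mul_of_nonneg_left ?_ hpn
    by_cases hev : (∑ i, f (x i)) ≤ n * τ
    · rw [if_pos hev]
      rw [le_div_iff₀ hden, one_mul]
      have h2 : (n:ℝ) * δ ≤ n * μ - ∑ i, f (x i) := by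
        have : (n:ℝ) * τ = n * μ - n * δ := by ring
        linarith
      calc ((n:ℝ) * δ)^2 ≤ (n * μ - ∑ i, f (x i))^2 := by
            apply sq_le_sq'
            · nlinarith
            · exact h2
        _ = (∑ i, f (x i) - n * μ)^2 := by ring
    · rw [if_neg hev]
      positivity
  calc ∑ x : Fin n → σ, pn p n x * (if (∑ i, f (x i)) ≤ n * τ then 1 else 0)
      ≤ ∑ x : Fin n → σ, pn p n x * ((∑ i, f (x i) - n * μ)^2 / ((n:ℝ) * δ)^2) :=
        Finset.sum_le_sum fun x _ => pointwise x
    _ = (∑ x : Fin n → σ, pn p n x * (∑ i, f (x i) - n * μ)^2) / ((n:ℝ) * δ)^2 := by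
        rw [Finset.sum_div]
        exact Finset.sum_congr rfl fun x _ => by rw [mul_div_assoc]
    _ = (n * Var p f) / ((n:ℝ) * δ)^2 := by rw [second_moment hp1]
    _ = Var p f / ((n : ℝ) * δ^2) := by
        rw [mul_pow]
        rw [sq (n:ℝ)]
        field_simp


lemma condMI_eq {α β γ : Type} [Fintype α] [Fintype β] [Fintype γ]
    (Pa : α → ℝ) (Pc : γ → ℝ) (K : α → γ → β → ℝ)
    (hPa : IsPMF Pa) (hPc : IsPMF Pc) (hK : ∀ a c, IsPMF (K a c)) :
    condMI (fun a b c => Pa a * Pc c * K a c b)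
      = ∑ a, ∑ c, ∑ b, Pa a * Pc c * K a c b *
          Real.logb 2 (K a c b / ∑ a', Pa a' * K a' c b) := by
  classical
  have hKs : ∀ a c, ∑ b, K a c b = 1 := fun a c => (hK a c).2
  have hA : ∀ a c, (∑ b, Pa a * Pc c * K a c b) = Pa a * Pc c := by
    intro a c; rw [← Finset.mul_sum, hKs, mul_one]
  have hB : ∀ b c, (∑ a, Pa a * Pc c * K a c b) = Pc c * ∑ a', Pa a' * K a' c b := by
    intro b c; rw [Finset.mul_sum]; exact Finset.sum_congr rfl fun a _ => by ring
  have hC : ∀ c, (∑ a, ∑ b, Pa a * Pc c * K a c b) = Pc c := by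
    intro c; simp_rw [hA]; rw [← Finset.sum_mul, hPa.2, one_mul]
  simp only [condMI, ent, Fintype.sum_prod_type]
  have hC' : ∀ c, (∑ a, Pa a * Pc c) = Pc c := by
    intro c; rw [← Finset.sum_mul, hPa.2, one_mul]
  simp_rw [hA, hB, hC']
  have e1 : ∑ a, ∑ c, ∑ b, Pa a * Pc c * K a c b * Real.logb 2 (Pa a * Pc c)
      = ∑ a, ∑ c, Pa a * Pc c * Real.logb 2 (Pa a * Pc c) := by
    refine Finset.sum_congr rfl fun a _ => Finset.sum_congr rfl fun c _ => ?_
    rw [← Finset.sum_mul, hA]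
  have e2 : ∑ a, ∑ c, ∑ b, Pa a * Pc c * K a c b *
        Real.logb 2 (Pc c * ∑ a', Pa a' * K a' c b)
      = ∑ b, ∑ c, (Pc c * ∑ a', Pa a' * K a' c b) *
        Real.logb 2 (Pc c * ∑ a', Pa a' * K a' c b) := by
    rw [Finset.sum_comm]
    calc ∑ c, ∑ a, ∑ b, Pa a * Pc c * K a c b * Real.logb 2 (Pc c * ∑ a', Pa a' * K a' c b)
        = ∑ c, ∑ b, ∑ a, Pa a * Pc c * K a c b * Real.logb 2 (Pc c * ∑ a', Pa a' * K a' c b) :=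
          Finset.sum_congr rfl fun c _ => Finset.sum_comm
      _ = ∑ c, ∑ b, (Pc c * ∑ a', Pa a' * K a' c b) *
            Real.logb 2 (Pc c * ∑ a', Pa a' * K a' c b) := by
          refine Finset.sum_congr rfl fun c _ => Finset.sum_congr rfl fun b _ => ?_
          rw [← Finset.sum_mul, hB]
      _ = ∑ b, ∑ c, (Pc c * ∑ a', Pa a' * K a' c b) *
            Real.logb 2 (Pc c * ∑ a', Pa a' * K a' c b) := Finset.sum_comm
  have e3 : ∑ a, ∑ c, ∑ b, Pa a * Pc c * K a c b * Real.logb 2 (Pa a * Pc c * K a c b)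
      = ∑ a, ∑ b, ∑ c, Pa a * Pc c * K a c b * Real.logb 2 (Pa a * Pc c * K a c b) :=
    Finset.sum_congr rfl fun a _ => Finset.sum_comm
  have e4 : ∑ a, ∑ c, ∑ b, Pa a * Pc c * K a c b * Real.logb 2 (Pc c)
      = ∑ c, Pc c * Real.logb 2 (Pc c) := by
    calc ∑ a, ∑ c, ∑ b, Pa a * Pc c * K a c b * Real.logb 2 (Pc c)
        = ∑ a, ∑ c, Pa a * Pc c * Real.logb 2 (Pc c) := by
          refine Finset.sum_congr rfl fun a _ => Finset.sum_congr rfl fun c _ => ?_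
          rw [← Finset.sum_mul, hA]
      _ = ∑ c, ∑ a, Pa a * Pc c * Real.logb 2 (Pc c) := Finset.sum_comm
      _ = ∑ c, Pc c * Real.logb 2 (Pc c) := by
          refine Finset.sum_congr rfl fun c _ => ?_
          simp_rw [mul_assoc]
          rw [← Finset.sum_mul, hPa.2, one_mul]
  rw [← e1, ← e2, ← e3, ← e4]
  have comb : ∀ a c b,
      Pa a * Pc c * K a c b * Real.logb 2 (Pa a * Pc c * K a c b)
        + Pa a * Pc c * K a c b * Real.logb 2 (Pc c)
        - Pa a * Pc c * K a c b * Real.logb 2 (Pa a * Pc c)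
        - Pa a * Pc c * K a c b * Real.logb 2 (Pc c * ∑ a', Pa a' * K a' c b)
      = Pa a * Pc c * K a c b * Real.logb 2 (K a c b / ∑ a', Pa a' * K a' c b) := by
    intro a c b
    by_cases h : Pa a * Pc c * K a c b = 0
    · rw [h]; ring
    · have hPa0 : Pa a ≠ 0 := fun hh => h (by rw [hh]; ring)
      have hPc0 : Pc c ≠ 0 := fun hh => h (by rw [hh]; ring)
      have hK0 : K a c b ≠ 0 := fun hh => h (by rw [hh]; ring)
      have hKpos : 0 < K a c b := lt_of_le_of_ne ((hK a c).1 b) (Ne.symm hK0)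
      have hPapos : 0 < Pa a := lt_of_le_of_ne (hPa.1 a) (Ne.symm hPa0)
      have hqpos : 0 < ∑ a', Pa a' * K a' c b := by
        have hle : Pa a * K a c b ≤ ∑ a', Pa a' * K a' c b :=
          Finset.single_le_sum (f := fun a' => Pa a' * K a' c b)
            (fun a' _ => mul_nonneg (hPa.1 a') ((hK a' c).1 b)) (Finset.mem_univ a)
        exact lt_of_lt_of_le (mul_pos hPapos hKpos) hle
      have hq0 : (∑ a', Pa a' * K a' c b) ≠ 0 := ne_of_gt hqpos
      rw [Real.logb_div hK0 hq0, Real.logb_mul (mul_ne_zero hPa0 hPc0) hK0,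
        Real.logb_mul hPa0 hPc0, Real.logb_mul hPc0 hq0]
      ring
  have sumcomb : ∑ a, ∑ c, ∑ b, Pa a * Pc c * K a c b *
        Real.logb 2 (K a c b / ∑ a', Pa a' * K a' c b)
      = (∑ a, ∑ c, ∑ b, Pa a * Pc c * K a c b * Real.logb 2 (Pa a * Pc c * K a c b))
        + (∑ a, ∑ c, ∑ b, Pa a * Pc c * K a c b * Real.logb 2 (Pc c))
        - (∑ a, ∑ c, ∑ b, Pa a * Pc c * K a c b * Real.logb 2 (Pa a * Pc c))
        - (∑ a, ∑ c, ∑ b, Pa a * Pc c * K a c b *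
            Real.logb 2 (Pc c * ∑ a', Pa a' * K a' c b)) := by
    simp only [← Finset.sum_add_distrib, ← Finset.sum_sub_distrib]
    exact Finset.sum_congr rfl fun a _ => Finset.sum_congr rfl fun c _ =>
      Finset.sum_congr rfl fun b _ => (comb a c b).symm
  rw [sumcomb]
  ring




/-- two-coordinate marginalization -/
lemma sum_pi_pair2 {σ : Type} [Fintype σ] {p : σ → ℝ} (hp : ∑ a, p a = 1) {ι : Type}
    [Fintype ι] [DecidableEq ι] {i j : ι} (hij : i ≠ j) (g : σ → σ → ℝ) :
    ∑ c : ι → σ, (∏ k, p (c k)) * g (c i) (c j) = ∑ x, ∑ y, p x * p y * g x y := by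
  classical
  have hg : ∀ c : ι → σ, g (c i) (c j)
      = ∑ x, ∑ y, (if c i = x then (1:ℝ) else 0) * ((if c j = y then (1:ℝ) else 0) * g x y) := by
    intro c
    simp [ite_mul, one_mul, zero_mul, Finset.sum_ite_eq]
  calc ∑ c : ι → σ, (∏ k, p (c k)) * g (c i) (c j)
      = ∑ c : ι → σ, ∑ x, ∑ y, (∏ k, p (c k)) *
          ((if c i = x then (1:ℝ) else 0) * (if c j = y then (1:ℝ) else 0)) * g x y := by
        refine Finset.sum_congr rfl fun c _ => ?_
        rw [hg c, Finset.mul_sum]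
        refine Finset.sum_congr rfl fun x _ => ?_
        rw [Finset.mul_sum]
        refine Finset.sum_congr rfl fun y _ => by ring
    _ = ∑ x, ∑ y, ∑ c : ι → σ, (∏ k, p (c k)) *
          ((if c i = x then (1:ℝ) else 0) * (if c j = y then (1:ℝ) else 0)) * g x y := by
        rw [Finset.sum_comm]
        exact Finset.sum_congr rfl fun x _ => Finset.sum_comm
    _ = ∑ x, ∑ y, p x * p y * g x y := by
        refine Finset.sum_congr rfl fun x _ => Finset.sum_congr rfl fun y _ => ?_
        rw [← Finset.sum_mul]
        congr 1
        calc ∑ c : ι → σ, (∏ k, p (c k)) *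
              ((if c i = x then (1:ℝ) else 0) * (if c j = y then (1:ℝ) else 0))
            = Exp p (fun s => if s = x then (1:ℝ) else 0) *
              Exp p (fun s => if s = y then (1:ℝ) else 0) :=
              sum_pi_pair hp hij (fun s => if s = x then (1:ℝ) else 0)
                (fun s => if s = y then (1:ℝ) else 0)
          _ = p x * p y := by
              simp [Exp, mul_ite, mul_one, mul_zero, Finset.sum_ite_eq']

lemma sum_swap4 {X X' Y U : Type} [Fintype X] [Fintype X'] [Fintype Y] [Fintype U]
    (F : X → X' → Y → U → ℝ) :
    ∑ x, ∑ x', ∑ y, ∑ u, F x x' y u = ∑ y, ∑ u, ∑ x, ∑ x', F x x' y u := by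
  calc ∑ x, ∑ x', ∑ y, ∑ u, F x x' y u
      = ∑ x, ∑ y, ∑ x', ∑ u, F x x' y u :=
        Finset.sum_congr rfl fun x _ => Finset.sum_comm
    _ = ∑ y, ∑ x, ∑ x', ∑ u, F x x' y u := Finset.sum_comm
    _ = ∑ y, ∑ x, ∑ u, ∑ x', F x x' y u :=
        Finset.sum_congr rfl fun y _ => Finset.sum_congr rfl fun x _ => Finset.sum_comm
    _ = ∑ y, ∑ u, ∑ x, ∑ x', F x x' y u :=
        Finset.sum_congr rfl fun y _ => Finset.sum_comm


section Direction
variable {A C B : Type} [Fintype A] [Fintype C] [Fintype B]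

noncomputable def qf (Pa : A → ℝ) (K : A → C → B → ℝ) : C → B → ℝ :=
  fun c b => ∑ a, Pa a * K a c b
noncomputable def p3 (Pa : A → ℝ) (Pc : C → ℝ) (K : A → C → B → ℝ) : A × C × B → ℝ :=
  fun t => Pa t.1 * Pc t.2.1 * K t.1 t.2.1 t.2.2
noncomputable def Zf (Pa : A → ℝ) (K : A → C → B → ℝ) : A × C × B → ℝ :=
  fun t => Real.logb 2 (K t.1 t.2.1 t.2.2 / qf Pa K t.2.1 t.2.2)
noncomputable def Tv (n : ℕ) (τ : ℝ) : ℝ := (2:ℝ) ^ ((n:ℝ) * τ)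

def passes (Pa : A → ℝ) (K : A → C → B → ℝ) (n : ℕ) (τ : ℝ)
    (x : Fin n → A) (y : Fin n → C) (u : Fin n → B) : Prop :=
  Tv n τ * ∏ i, qf Pa K (y i) (u i) < ∏ i, K (x i) (y i) (u i)

open Classical in
noncomputable def Dec (Pa : A → ℝ) (K : A → C → B → ℝ) (n : ℕ) (τ : ℝ) {M : ℕ}
    (cA : Fin M → Fin n → A) (y : Fin n → C) (u : Fin n → B) : Option (Fin M) :=
  if h : ∃ w, passes Pa K n τ (cA w) y u then some h.choose else none

def tripleEquiv (n : ℕ) :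
    (Fin n → A × C × B) ≃ ((Fin n → A) × (Fin n → C) × (Fin n → B)) where
  toFun z := (fun i => (z i).1, fun i => (z i).2.1, fun i => (z i).2.2)
  invFun t := fun i => (t.1 i, t.2.1 i, t.2.2 i)
  left_inv z := rfl
  right_inv t := rfl

variable {Pa : A → ℝ} {Pc : C → ℝ} {K : A → C → B → ℝ}

lemma p3_nonneg (hPa : IsPMF Pa) (hPc : IsPMF Pc) (hK : ∀ a c, IsPMF (K a c)) :
    ∀ t, 0 ≤ p3 Pa Pc K t := fun t =>
  mul_nonneg (mul_nonneg (hPa.1 _) (hPc.1 _)) ((hK _ _).1 _)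

lemma p3_sum (hPa : IsPMF Pa) (hPc : IsPMF Pc) (hK : ∀ a c, IsPMF (K a c)) :
    ∑ t, p3 Pa Pc K t = 1 := by
  simp only [p3, Fintype.sum_prod_type]
  have h1 : ∀ (a : A) (c : C), ∑ b, Pa a * Pc c * K a c b = Pa a * Pc c := by
    intro a c; rw [← Finset.mul_sum, (hK a c).2, mul_one]
  simp_rw [h1]
  have h2 : ∀ a : A, ∑ c, Pa a * Pc c = Pa a := by
    intro a; rw [← Finset.mul_sum, hPc.2, mul_one]
  simp_rw [h2, hPa.2]

lemma exp_Zf_eq : Exp (p3 Pa Pc K) (Zf Pa K)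
    = ∑ a, ∑ c, ∑ b, Pa a * Pc c * K a c b *
        Real.logb 2 (K a c b / ∑ a', Pa a' * K a' c b) := by
  simp only [Exp, p3, Zf, qf, Fintype.sum_prod_type]


variable [DecidableEq A]

lemma dec_indicator (n : ℕ) (τ : ℝ) {M : ℕ} (cA : Fin M → Fin n → A)
    (y : Fin n → C) (u : Fin n → B) (w : Fin M) :
    (if Dec Pa K n τ cA y u ≠ some w then (1:ℝ) else 0)
      ≤ (if ¬ passes Pa K n τ (cA w) y u then 1 else 0)
        + ∑ w' ∈ Finset.univ.erase w, (if passes Pa K n τ (cA w') y u then 1 else 0) := by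
  classical
  by_cases hdw : Dec Pa K n τ cA y u ≠ some w
  · rw [if_pos hdw]
    by_cases hp : passes Pa K n τ (cA w) y u
    · rw [if_neg (not_not_intro hp)]
      have hex : ∃ w', passes Pa K n τ (cA w') y u := ⟨w, hp⟩
      have hDec : Dec Pa K n τ cA y u = some hex.choose := by
        rw [Dec, dif_pos hex]
      have hch : hex.choose ≠ w := by
        intro hh; apply hdw; rw [hDec, hh]
      have hmem : hex.choose ∈ Finset.univ.erase w := Finset.mem_erase.2 ⟨hch, Finset.mem_univ _⟩
      have : (1:ℝ) = (if passes Pa K n τ (cA hex.choose) y u then (1:ℝ) else 0) := by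
        rw [if_pos hex.choose_spec]
      calc (1:ℝ) = (if passes Pa K n τ (cA hex.choose) y u then (1:ℝ) else 0) := this
        _ ≤ ∑ w' ∈ Finset.univ.erase w, (if passes Pa K n τ (cA w') y u then (1:ℝ) else 0) :=
          Finset.single_le_sum (f := fun w' => if passes Pa K n τ (cA w') y u then (1:ℝ) else 0) (fun w' _ => by positivity) hmem
        _ ≤ 0 + ∑ w' ∈ Finset.univ.erase w, (if passes Pa K n τ (cA w') y u then (1:ℝ) else 0) := by
          rw [zero_add]
    · rw [if_pos hp]
      have : (0:ℝ) ≤ ∑ w' ∈ Finset.univ.erase w, (if passes Pa K n τ (cA w') y u then (1:ℝ) else 0) :=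
        Finset.sum_nonneg fun w' _ => by positivity
      linarith
  · rw [if_neg hdw]
    have h1 : (0:ℝ) ≤ (if ¬ passes Pa K n τ (cA w) y u then (1:ℝ) else 0) := by positivity
    have h2 : (0:ℝ) ≤ ∑ w' ∈ Finset.univ.erase w, (if passes Pa K n τ (cA w') y u then (1:ℝ) else 0) :=
      Finset.sum_nonneg fun w' _ => by positivity
    linarith


lemma fail_le (hPa : IsPMF Pa) (hPc : IsPMF Pc) (hK : ∀ a c, IsPMF (K a c))
    {n : ℕ} (hn : 1 ≤ n) {τ : ℝ} (hτ : τ < Exp (p3 Pa Pc K) (Zf Pa K)) :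
    ∑ x : Fin n → A, pn Pa n x * ∑ y : Fin n → C, pn Pc n y *
        ∑ u : Fin n → B, (∏ i, K (x i) (y i) (u i)) *
          (if ¬ passes Pa K n τ x y u then 1 else 0)
      ≤ Var (p3 Pa Pc K) (Zf Pa K) / ((n:ℝ) * (Exp (p3 Pa Pc K) (Zf Pa K) - τ)^2) := by
  classical
  have key : ∑ x : Fin n → A, pn Pa n x * ∑ y : Fin n → C, pn Pc n y *
        ∑ u : Fin n → B, (∏ i, K (x i) (y i) (u i)) *
          (if ¬ passes Pa K n τ x y u then 1 else 0)
      = ∑ z : Fin n → A × C × B, pn (p3 Pa Pc K) n z *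
          (if (∑ i, Zf Pa K (z i)) ≤ (n:ℝ) * τ then 1 else 0) := by
    calc ∑ x : Fin n → A, pn Pa n x * ∑ y : Fin n → C, pn Pc n y *
          ∑ u : Fin n → B, (∏ i, K (x i) (y i) (u i)) *
            (if ¬ passes Pa K n τ x y u then 1 else 0)
        = ∑ t : (Fin n → A) × (Fin n → C) × (Fin n → B),
            pn Pa n t.1 * (pn Pc n t.2.1 *
              ((∏ i, K (t.1 i) (t.2.1 i) (t.2.2 i)) *
                (if ¬ passes Pa K n τ t.1 t.2.1 t.2.2 then 1 else 0))) := by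
          simp only [Fintype.sum_prod_type, Finset.mul_sum]
      _ = ∑ z : Fin n → A × C × B,
            pn Pa n (fun i => (z i).1) * (pn Pc n (fun i => (z i).2.1) *
              ((∏ i, K (z i).1 (z i).2.1 (z i).2.2) *
                (if ¬ passes Pa K n τ (fun i => (z i).1) (fun i => (z i).2.1)
                    (fun i => (z i).2.2) then 1 else 0))) := by
          rw [← Equiv.sum_comp (tripleEquiv (A := A) (C := C) (B := B) n)
            (fun t : (Fin n → A) × (Fin n → C) × (Fin n → B) =>
            pn Pa n t.1 * (pn Pc n t.2.1 *
              ((∏ i, K (t.1 i) (t.2.1 i) (t.2.2 i)) *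
                (if ¬ passes Pa K n τ t.1 t.2.1 t.2.2 then 1 else 0))))]
          rfl
      _ = ∑ z : Fin n → A × C × B, pn (p3 Pa Pc K) n z *
            (if (∑ i, Zf Pa K (z i)) ≤ (n:ℝ) * τ then 1 else 0) := by
          refine Finset.sum_congr rfl fun z _ => ?_
          have hprod : pn Pa n (fun i => (z i).1) * (pn Pc n (fun i => (z i).2.1) *
              ∏ i, K (z i).1 (z i).2.1 (z i).2.2) = pn (p3 Pa Pc K) n z := by
            simp only [pn, p3, ← Finset.prod_mul_distrib, mul_assoc]
          have hgroup : pn Pa n (fun i => (z i).1) * (pn Pc n (fun i => (z i).2.1) *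
              ((∏ i, K (z i).1 (z i).2.1 (z i).2.2) *
                (if ¬ passes Pa K n τ (fun i => (z i).1) (fun i => (z i).2.1)
                    (fun i => (z i).2.2) then 1 else 0)))
              = pn (p3 Pa Pc K) n z *
                (if ¬ passes Pa K n τ (fun i => (z i).1) (fun i => (z i).2.1)
                    (fun i => (z i).2.2) then 1 else 0) := by
            rw [← hprod]; ring
          rw [hgroup]
          by_cases hz : pn (p3 Pa Pc K) n z = 0
          · rw [hz, zero_mul, zero_mul]
          · have hco : ∀ i, p3 Pa Pc K (z i) ≠ 0 := by
              intro i hzero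
              exact hz (Finset.prod_eq_zero (Finset.mem_univ i) hzero)
            have hKpos : ∀ i, 0 < K (z i).1 (z i).2.1 (z i).2.2 := by
              intro i
              have hne : K (z i).1 (z i).2.1 (z i).2.2 ≠ 0 := by
                intro hh; exact hco i (by simp [p3, hh])
              exact lt_of_le_of_ne ((hK _ _).1 _) (Ne.symm hne)
            have hqpos : ∀ i, 0 < qf Pa K (z i).2.1 (z i).2.2 := by
              intro i
              have hPapos : 0 < Pa (z i).1 := by
                have hne : Pa (z i).1 ≠ 0 := by
                  intro hh; exact hco i (by simp [p3, hh])
                exact lt_of_le_of_ne (hPa.1 _) (Ne.symm hne)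
              have hle : Pa (z i).1 * K (z i).1 (z i).2.1 (z i).2.2
                  ≤ qf Pa K (z i).2.1 (z i).2.2 :=
                Finset.single_le_sum (f := fun a => Pa a * K a (z i).2.1 (z i).2.2)
                  (fun a _ => mul_nonneg (hPa.1 a) ((hK _ _).1 _)) (Finset.mem_univ _)
              exact lt_of_lt_of_le (mul_pos hPapos (hKpos i)) hle
            have hiff : (¬ passes Pa K n τ (fun i => (z i).1) (fun i => (z i).2.1)
                (fun i => (z i).2.2)) ↔ (∑ i, Zf Pa K (z i)) ≤ (n:ℝ) * τ := by
              rw [passes, not_lt]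
              have hZ : ∑ i, Zf Pa K (z i)
                  = Real.logb 2 ((∏ i, K (z i).1 (z i).2.1 (z i).2.2) /
                      ∏ i, qf Pa K (z i).2.1 (z i).2.2) := by
                calc ∑ i, Zf Pa K (z i)
                    = ∑ i, Real.logb 2 (K (z i).1 (z i).2.1 (z i).2.2 /
                        qf Pa K (z i).2.1 (z i).2.2) := rfl
                  _ = Real.logb 2 (∏ i, (K (z i).1 (z i).2.1 (z i).2.2 /
                        qf Pa K (z i).2.1 (z i).2.2)) :=
                      (Real.logb_prod _ _ fun i _ =>
                        ne_of_gt (div_pos (hKpos i) (hqpos i))).symm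
                  _ = Real.logb 2 ((∏ i, K (z i).1 (z i).2.1 (z i).2.2) /
                        ∏ i, qf Pa K (z i).2.1 (z i).2.2) := by
                      rw [Finset.prod_div_distrib]
              rw [hZ, Real.logb_le_iff_le_rpow one_lt_two
                (div_pos (Finset.prod_pos fun i _ => hKpos i)
                  (Finset.prod_pos fun i _ => hqpos i))]
              rw [div_le_iff₀ (Finset.prod_pos fun i _ => hqpos i)]
              rw [Tv, mul_comm]
            by_cases hpass : (¬ passes Pa K n τ (fun i => (z i).1) (fun i => (z i).2.1)
                (fun i => (z i).2.2))
            · rw [if_pos hpass, if_pos (hiff.1 hpass)]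
            · rw [if_neg hpass, if_neg (fun hh => hpass (hiff.2 hh))]
  rw [key]
  exact cheb (p3_nonneg hPa hPc hK) (p3_sum hPa hPc hK) _ hτ hn

lemma wrong_le (hPa : IsPMF Pa) (hPc : IsPMF Pc) (hK : ∀ a c, IsPMF (K a c))
    {n : ℕ} {τ : ℝ} :
    ∑ x : Fin n → A, ∑ x' : Fin n → A, pn Pa n x * pn Pa n x' *
        (∑ y : Fin n → C, pn Pc n y * ∑ u : Fin n → B,
          (∏ i, K (x i) (y i) (u i)) * (if passes Pa K n τ x' y u then 1 else 0))
      ≤ (Tv n τ)⁻¹ := by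
  classical
  have hT : 0 < Tv n τ := Real.rpow_pos_of_pos two_pos _
  have hQ : ∀ (y : Fin n → C) (u : Fin n → B),
      ∑ x : Fin n → A, pn Pa n x * ∏ i, K (x i) (y i) (u i)
        = ∏ i, qf Pa K (y i) (u i) := by
    intro y u
    calc ∑ x : Fin n → A, pn Pa n x * ∏ i, K (x i) (y i) (u i)
        = ∑ x : Fin n → A, ∏ i, (fun i a => Pa a * K a (y i) (u i)) i (x i) := by
          refine Finset.sum_congr rfl fun x _ => ?_
          rw [pn, ← Finset.prod_mul_distrib]
      _ = ∏ i, ∑ a, Pa a * K a (y i) (u i) :=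
          sum_fn_prod (fun i a => Pa a * K a (y i) (u i))
      _ = ∏ i, qf Pa K (y i) (u i) := rfl
  have hKn1 : ∀ (x' : Fin n → A) (y : Fin n → C),
      ∑ u : Fin n → B, ∏ i, K (x' i) (y i) (u i) = 1 := by
    intro x' y
    calc ∑ u : Fin n → B, ∏ i, K (x' i) (y i) (u i)
        = ∏ i, ∑ b, K (x' i) (y i) b := sum_fn_prod (fun i b => K (x' i) (y i) b)
      _ = 1 := by
        rw [Finset.prod_congr rfl fun i _ => (hK (x' i) (y i)).2, Finset.prod_const_one]
  calc ∑ x : Fin n → A, ∑ x' : Fin n → A, pn Pa n x * pn Pa n x' *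
        (∑ y : Fin n → C, pn Pc n y * ∑ u : Fin n → B,
          (∏ i, K (x i) (y i) (u i)) * (if passes Pa K n τ x' y u then 1 else 0))
      = ∑ x : Fin n → A, ∑ x' : Fin n → A, ∑ y : Fin n → C, ∑ u : Fin n → B,
          pn Pc n y * ((pn Pa n x * ∏ i, K (x i) (y i) (u i)) *
            (pn Pa n x' * (if passes Pa K n τ x' y u then 1 else 0))) := by
        refine Finset.sum_congr rfl fun x _ => Finset.sum_congr rfl fun x' _ => ?_
        simp only [Finset.mul_sum, Finset.sum_mul]
        refine Finset.sum_congr rfl fun y _ => ?_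
        refine Finset.sum_congr rfl fun u _ => by ring
    _ = ∑ y : Fin n → C, ∑ u : Fin n → B, ∑ x : Fin n → A, ∑ x' : Fin n → A,
          pn Pc n y * ((pn Pa n x * ∏ i, K (x i) (y i) (u i)) *
            (pn Pa n x' * (if passes Pa K n τ x' y u then 1 else 0))) :=
        sum_swap4 _
    _ = ∑ y : Fin n → C, ∑ u : Fin n → B, pn Pc n y *
          ((∏ i, qf Pa K (y i) (u i)) *
            (∑ x' : Fin n → A, pn Pa n x' * (if passes Pa K n τ x' y u then 1 else 0))) := by
        refine Finset.sum_congr rfl fun y _ => Finset.sum_congr rfl fun u _ => ?_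
        rw [← hQ y u, Finset.sum_mul_sum]
        simp only [Finset.mul_sum]
    _ ≤ ∑ y : Fin n → C, ∑ u : Fin n → B, pn Pc n y *
          ((Tv n τ)⁻¹ * ∑ x' : Fin n → A, pn Pa n x' * ∏ i, K (x' i) (y i) (u i)) := by
        refine Finset.sum_le_sum fun y _ => Finset.sum_le_sum fun u _ => ?_
        refine mul_le_mul_of_nonneg_left ?_ (pn_nonneg' hPc.1 y)
        rw [Finset.mul_sum, Finset.mul_sum]
        refine Finset.sum_le_sum fun x' _ => ?_
        by_cases hpass : passes Pa K n τ x' y u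
        · rw [if_pos hpass]
          have h1 : (∏ i, qf Pa K (y i) (u i)) ≤ (Tv n τ)⁻¹ * ∏ i, K (x' i) (y i) (u i) := by
            rw [passes] at hpass
            rw [inv_mul_eq_div, le_div_iff₀ hT, mul_comm]
            exact le_of_lt hpass
          have h2 := mul_le_mul_of_nonneg_left h1 (pn_nonneg' hPa.1 x')
          calc (∏ i, qf Pa K (y i) (u i)) * (pn Pa n x' * 1)
              = pn Pa n x' * (∏ i, qf Pa K (y i) (u i)) := by ring
            _ ≤ pn Pa n x' * ((Tv n τ)⁻¹ * ∏ i, K (x' i) (y i) (u i)) := h2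
            _ = (Tv n τ)⁻¹ * (pn Pa n x' * ∏ i, K (x' i) (y i) (u i)) := by ring
        · rw [if_neg hpass, mul_zero, mul_zero]
          have h3 : (0:ℝ) ≤ pn Pa n x' * ∏ i, K (x' i) (y i) (u i) :=
            mul_nonneg (pn_nonneg' hPa.1 x')
              (Finset.prod_nonneg fun i _ => (hK _ _).1 _)
          positivity
    _ = (Tv n τ)⁻¹ := by
        have h1 : ∀ y : Fin n → C, ∑ u : Fin n → B,
            ∑ x' : Fin n → A, pn Pa n x' * ∏ i, K (x' i) (y i) (u i)
              = 1 := by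
          intro y
          rw [Finset.sum_comm]
          calc ∑ x' : Fin n → A, ∑ u : Fin n → B, pn Pa n x' * ∏ i, K (x' i) (y i) (u i)
              = ∑ x' : Fin n → A, pn Pa n x' * ∑ u : Fin n → B, ∏ i, K (x' i) (y i) (u i) := by
                refine Finset.sum_congr rfl fun x' _ => (Finset.mul_sum _ _ _).symm
            _ = ∑ x' : Fin n → A, pn Pa n x' := by
                refine Finset.sum_congr rfl fun x' _ => by rw [hKn1 x' y, mul_one]
            _ = 1 := pn_sum hPa.2 n
        calc ∑ y : Fin n → C, ∑ u : Fin n → B, pn Pc n y *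
              ((Tv n τ)⁻¹ * ∑ x' : Fin n → A, pn Pa n x' * ∏ i, K (x' i) (y i) (u i))
            = ∑ y : Fin n → C, pn Pc n y * (Tv n τ)⁻¹ *
                ∑ u : Fin n → B, ∑ x' : Fin n → A,
                  pn Pa n x' * ∏ i, K (x' i) (y i) (u i) := by
              refine Finset.sum_congr rfl fun y _ => ?_
              simp only [Finset.mul_sum, Finset.sum_mul]
              refine Finset.sum_congr rfl fun u _ => ?_
              refine Finset.sum_congr rfl fun x' _ => by ring
          _ = ∑ y : Fin n → C, pn Pc n y * (Tv n τ)⁻¹ := by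
              refine Finset.sum_congr rfl fun y _ => by rw [h1 y, mul_one]
          _ = (Tv n τ)⁻¹ := by
              rw [← Finset.sum_mul, pn_sum hPc.2 n, one_mul]


lemma swap_out {σ₁ σ₂ ω : Type} [Fintype σ₁] [Fintype σ₂] (s : Finset ω)
    (W : σ₁ → σ₂ → ℝ) (X : σ₁ → σ₂ → ω → ℝ) :
    ∑ c : σ₁, ∑ d : σ₂, W c d * ∑ w' ∈ s, X c d w'
      = ∑ w' ∈ s, ∑ c : σ₁, ∑ d : σ₂, W c d * X c d w' := by
  simp_rw [Finset.mul_sum]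
  calc ∑ c : σ₁, ∑ d : σ₂, ∑ w' ∈ s, W c d * X c d w'
      = ∑ c : σ₁, ∑ w' ∈ s, ∑ d : σ₂, W c d * X c d w' :=
        Finset.sum_congr rfl fun c _ => Finset.sum_comm
    _ = ∑ w' ∈ s, ∑ c : σ₁, ∑ d : σ₂, W c d * X c d w' := Finset.sum_comm

lemma marg2 {σ₁ σ₂ : Type} [Fintype σ₁] [Fintype σ₂] {p₁ : σ₁ → ℝ} {p₂ : σ₂ → ℝ}
    (h1 : ∑ a, p₁ a = 1) (h2 : ∑ a, p₂ a = 1) {ι κ : Type} [Fintype ι] [DecidableEq ι]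
    [Fintype κ] [DecidableEq κ] (i : ι) (j : κ) (H : σ₁ → σ₂ → ℝ) :
    ∑ c : ι → σ₁, ∑ d : κ → σ₂, ((∏ k, p₁ (c k)) * ∏ l, p₂ (d l)) * H (c i) (d j)
      = ∑ x, p₁ x * ∑ y, p₂ y * H x y := by
  have inner : ∀ c : ι → σ₁,
      ∑ d : κ → σ₂, ((∏ k, p₁ (c k)) * ∏ l, p₂ (d l)) * H (c i) (d j)
        = (∏ k, p₁ (c k)) * (∑ y, p₂ y * H (c i) y) := by
    intro c
    have := sum_pi_single h2 j (fun y => H (c i) y)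
    calc ∑ d : κ → σ₂, ((∏ k, p₁ (c k)) * ∏ l, p₂ (d l)) * H (c i) (d j)
        = ∑ d : κ → σ₂, (∏ k, p₁ (c k)) * ((∏ l, p₂ (d l)) * H (c i) (d j)) := by
          refine Finset.sum_congr rfl fun d _ => by ring
      _ = (∏ k, p₁ (c k)) * ∑ d : κ → σ₂, (∏ l, p₂ (d l)) * H (c i) (d j) :=
          (Finset.mul_sum _ _ _).symm
      _ = (∏ k, p₁ (c k)) * (∑ y, p₂ y * H (c i) y) := by rw [this]; rfl
  calc ∑ c : ι → σ₁, ∑ d : κ → σ₂, ((∏ k, p₁ (c k)) * ∏ l, p₂ (d l)) * H (c i) (d j)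
      = ∑ c : ι → σ₁, (∏ k, p₁ (c k)) * (∑ y, p₂ y * H (c i) y) :=
        Finset.sum_congr rfl fun c _ => inner c
    _ = ∑ x, p₁ x * ∑ y, p₂ y * H x y :=
        (sum_pi_single h1 i (fun x => ∑ y, p₂ y * H x y)).trans rfl

lemma marg3 {σ₁ σ₂ : Type} [Fintype σ₁] [Fintype σ₂] {p₁ : σ₁ → ℝ} {p₂ : σ₂ → ℝ}
    (h1 : ∑ a, p₁ a = 1) (h2 : ∑ a, p₂ a = 1) {ι κ : Type} [Fintype ι] [DecidableEq ι]
    [Fintype κ] [DecidableEq κ] {i i' : ι} (hii' : i ≠ i') (j : κ) (H : σ₁ → σ₁ → σ₂ → ℝ) :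
    ∑ c : ι → σ₁, ∑ d : κ → σ₂, ((∏ k, p₁ (c k)) * ∏ l, p₂ (d l)) * H (c i) (c i') (d j)
      = ∑ x, ∑ x', p₁ x * p₁ x' * (∑ y, p₂ y * H x x' y) := by
  have inner : ∀ c : ι → σ₁,
      ∑ d : κ → σ₂, ((∏ k, p₁ (c k)) * ∏ l, p₂ (d l)) * H (c i) (c i') (d j)
        = (∏ k, p₁ (c k)) * (∑ y, p₂ y * H (c i) (c i') y) := by
    intro c
    have := sum_pi_single h2 j (fun y => H (c i) (c i') y)
    calc ∑ d : κ → σ₂, ((∏ k, p₁ (c k)) * ∏ l, p₂ (d l)) * H (c i) (c i') (d j)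
        = ∑ d : κ → σ₂, (∏ k, p₁ (c k)) * ((∏ l, p₂ (d l)) * H (c i) (c i') (d j)) := by
          refine Finset.sum_congr rfl fun d _ => by ring
      _ = (∏ k, p₁ (c k)) * ∑ d : κ → σ₂, (∏ l, p₂ (d l)) * H (c i) (c i') (d j) :=
          (Finset.mul_sum _ _ _).symm
      _ = (∏ k, p₁ (c k)) * (∑ y, p₂ y * H (c i) (c i') y) := by rw [this]; rfl
  calc ∑ c : ι → σ₁, ∑ d : κ → σ₂, ((∏ k, p₁ (c k)) * ∏ l, p₂ (d l)) * H (c i) (c i') (d j)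
      = ∑ c : ι → σ₁, (∏ k, p₁ (c k)) * (fun x x' => ∑ y, p₂ y * H x x' y) (c i) (c i') :=
        Finset.sum_congr rfl fun c _ => inner c
    _ = ∑ x, ∑ x', p₁ x * p₁ x' * (∑ y, p₂ y * H x x' y) :=
        sum_pi_pair2 h1 hii' (fun x x' => ∑ y, p₂ y * H x x' y)

lemma dir_bound (hPa : IsPMF Pa) (hPc : IsPMF Pc) (hK : ∀ a c, IsPMF (K a c))
    {n M M' : ℕ} (hn : 1 ≤ n) (hM : 1 ≤ M) (hM' : 1 ≤ M') {τ : ℝ}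
    (hτ : τ < Exp (p3 Pa Pc K) (Zf Pa K)) :
    ∑ cA : Fin M → Fin n → A, ∑ cC : Fin M' → Fin n → C,
      ((∏ w, pn Pa n (cA w)) * ∏ v, pn Pc n (cC v)) *
        (((M:ℝ) * (M':ℝ))⁻¹ * ∑ w, ∑ v, ∑ u : Fin n → B,
          (∏ i, K (cA w i) (cC v i) (u i)) *
            (if Dec Pa K n τ cA (cC v) u ≠ some w then 1 else 0))
      ≤ Var (p3 Pa Pc K) (Zf Pa K) / ((n:ℝ) * (Exp (p3 Pa Pc K) (Zf Pa K) - τ)^2)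
        + (M:ℝ) * (Tv n τ)⁻¹ := by
  classical
  have hT : 0 < Tv n τ := Real.rpow_pos_of_pos two_pos _
  have hM0 : (0:ℝ) < (M:ℝ) := by exact_mod_cast hM
  have hM'0 : (0:ℝ) < (M':ℝ) := by exact_mod_cast hM'
  have hMM' : (0:ℝ) < (M:ℝ) * (M':ℝ) := mul_pos hM0 hM'0
  have hWgt0 : ∀ (cA : Fin M → Fin n → A) (cC : Fin M' → Fin n → C),
      0 ≤ (∏ w, pn Pa n (cA w)) * ∏ v, pn Pc n (cC v) :=
    fun cA cC => mul_nonneg (Finset.prod_nonneg fun w _ => pn_nonneg' hPa.1 _)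
      (Finset.prod_nonneg fun v _ => pn_nonneg' hPc.1 _)
  have hKn0 : ∀ (x : Fin n → A) (y : Fin n → C) (u : Fin n → B),
      0 ≤ ∏ i, K (x i) (y i) (u i) :=
    fun x y u => Finset.prod_nonneg fun i _ => (hK _ _).1 _
  -- inner bound via dec_indicator
  have hinner : ∀ (cA : Fin M → Fin n → A) (cC : Fin M' → Fin n → C),
      (∑ w, ∑ v, ∑ u : Fin n → B,
          (∏ i, K (cA w i) (cC v i) (u i)) *
            (if Dec Pa K n τ cA (cC v) u ≠ some w then 1 else 0))
        ≤ (∑ w, ∑ v, ∑ u : Fin n → B, (∏ i, K (cA w i) (cC v i) (u i)) *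
              (if ¬ passes Pa K n τ (cA w) (cC v) u then 1 else 0))
          + ∑ w, ∑ v, ∑ w' ∈ Finset.univ.erase w, ∑ u : Fin n → B,
              (∏ i, K (cA w i) (cC v i) (u i)) *
                (if passes Pa K n τ (cA w') (cC v) u then 1 else 0) := by
    intro cA cC
    rw [← Finset.sum_add_distrib]
    refine Finset.sum_le_sum fun w _ => ?_
    rw [← Finset.sum_add_distrib]
    refine Finset.sum_le_sum fun v _ => ?_
    calc ∑ u : Fin n → B, (∏ i, K (cA w i) (cC v i) (u i)) *
            (if Dec Pa K n τ cA (cC v) u ≠ some w then 1 else 0)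
        ≤ ∑ u : Fin n → B, (∏ i, K (cA w i) (cC v i) (u i)) *
            ((if ¬ passes Pa K n τ (cA w) (cC v) u then 1 else 0)
              + ∑ w' ∈ Finset.univ.erase w,
                  (if passes Pa K n τ (cA w') (cC v) u then 1 else 0)) :=
          Finset.sum_le_sum fun u _ => mul_le_mul_of_nonneg_left
            (dec_indicator n τ cA (cC v) u w) (hKn0 _ _ _)
      _ = (∑ u : Fin n → B, (∏ i, K (cA w i) (cC v i) (u i)) *
              (if ¬ passes Pa K n τ (cA w) (cC v) u then 1 else 0))
          + ∑ w' ∈ Finset.univ.erase w, ∑ u : Fin n → B,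
              (∏ i, K (cA w i) (cC v i) (u i)) *
                (if passes Pa K n τ (cA w') (cC v) u then 1 else 0) := by
          have hsw : ∑ w' ∈ Finset.univ.erase w, ∑ u : Fin n → B,
              (∏ i, K (cA w i) (cC v i) (u i)) *
                (if passes Pa K n τ (cA w') (cC v) u then 1 else 0)
              = ∑ u : Fin n → B, ∑ w' ∈ Finset.univ.erase w,
                  (∏ i, K (cA w i) (cC v i) (u i)) *
                    (if passes Pa K n τ (cA w') (cC v) u then 1 else 0) :=
            Finset.sum_comm
          rw [hsw, ← Finset.sum_add_distrib]
          refine Finset.sum_congr rfl fun u _ => ?_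
          rw [mul_add, Finset.mul_sum]
  set FB := Var (p3 Pa Pc K) (Zf Pa K) /
      ((n:ℝ) * (Exp (p3 Pa Pc K) (Zf Pa K) - τ)^2) with hFB
  -- Sf computation
  have hSf : ∑ cA : Fin M → Fin n → A, ∑ cC : Fin M' → Fin n → C,
      ((∏ w, pn Pa n (cA w)) * ∏ v, pn Pc n (cC v)) *
        (∑ w, ∑ v, ∑ u : Fin n → B, (∏ i, K (cA w i) (cC v i) (u i)) *
          (if ¬ passes Pa K n τ (cA w) (cC v) u then 1 else 0))
      ≤ (M:ℝ) * (M':ℝ) * FB := by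
    have hfix : ∀ (w : Fin M) (v : Fin M'),
        ∑ cA : Fin M → Fin n → A, ∑ cC : Fin M' → Fin n → C,
          ((∏ w'', pn Pa n (cA w'')) * ∏ v'', pn Pc n (cC v'')) *
            (∑ u : Fin n → B, (∏ i, K (cA w i) (cC v i) (u i)) *
              (if ¬ passes Pa K n τ (cA w) (cC v) u then 1 else 0))
          ≤ FB := by
      intro w v
      have := marg2 (pn_sum hPa.2 n) (pn_sum hPc.2 n) w v
        (fun x y => ∑ u : Fin n → B, (∏ i, K (x i) (y i) (u i)) *
          (if ¬ passes Pa K n τ x y u then 1 else 0))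
      rw [this]
      exact fail_le hPa hPc hK hn hτ
    calc ∑ cA : Fin M → Fin n → A, ∑ cC : Fin M' → Fin n → C,
        ((∏ w, pn Pa n (cA w)) * ∏ v, pn Pc n (cC v)) *
          (∑ w, ∑ v, ∑ u : Fin n → B, (∏ i, K (cA w i) (cC v i) (u i)) *
            (if ¬ passes Pa K n τ (cA w) (cC v) u then 1 else 0))
        = ∑ w : Fin M, ∑ v : Fin M', ∑ cA : Fin M → Fin n → A, ∑ cC : Fin M' → Fin n → C,
            ((∏ w'', pn Pa n (cA w'')) * ∏ v'', pn Pc n (cC v'')) *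
              (∑ u : Fin n → B, (∏ i, K (cA w i) (cC v i) (u i)) *
                (if ¬ passes Pa K n τ (cA w) (cC v) u then 1 else 0)) := by
          refine Eq.trans ?_ (sum_swap4 _)
          refine Finset.sum_congr rfl fun cA _ => Finset.sum_congr rfl fun cC _ => ?_
          simp only [Finset.mul_sum]
      _ ≤ ∑ w : Fin M, ∑ v : Fin M', FB :=
          Finset.sum_le_sum fun w _ => Finset.sum_le_sum fun v _ => hfix w v
      _ = (M:ℝ) * (M':ℝ) * FB := by
          simp [Finset.sum_const, Finset.card_univ]
          ring
  -- Sw computation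
  have hSw : ∑ cA : Fin M → Fin n → A, ∑ cC : Fin M' → Fin n → C,
      ((∏ w, pn Pa n (cA w)) * ∏ v, pn Pc n (cC v)) *
        (∑ w, ∑ v, ∑ w' ∈ Finset.univ.erase w, ∑ u : Fin n → B,
          (∏ i, K (cA w i) (cC v i) (u i)) *
            (if passes Pa K n τ (cA w') (cC v) u then 1 else 0))
      ≤ (M:ℝ) * (M':ℝ) * ((M:ℝ) * (Tv n τ)⁻¹) := by
    have hfix : ∀ (w : Fin M) (v : Fin M'),
        ∑ cA : Fin M → Fin n → A, ∑ cC : Fin M' → Fin n → C,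
          ((∏ w'', pn Pa n (cA w'')) * ∏ v'', pn Pc n (cC v'')) *
            (∑ w' ∈ Finset.univ.erase w, ∑ u : Fin n → B,
              (∏ i, K (cA w i) (cC v i) (u i)) *
                (if passes Pa K n τ (cA w') (cC v) u then 1 else 0))
          ≤ (M:ℝ) * (Tv n τ)⁻¹ := by
      intro w v
      calc ∑ cA : Fin M → Fin n → A, ∑ cC : Fin M' → Fin n → C,
          ((∏ w'', pn Pa n (cA w'')) * ∏ v'', pn Pc n (cC v'')) *
            (∑ w' ∈ Finset.univ.erase w, ∑ u : Fin n → B,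
              (∏ i, K (cA w i) (cC v i) (u i)) *
                (if passes Pa K n τ (cA w') (cC v) u then 1 else 0))
          = ∑ w' ∈ Finset.univ.erase w, ∑ cA : Fin M → Fin n → A,
              ∑ cC : Fin M' → Fin n → C,
              ((∏ w'', pn Pa n (cA w'')) * ∏ v'', pn Pc n (cC v'')) *
                (∑ u : Fin n → B, (∏ i, K (cA w i) (cC v i) (u i)) *
                  (if passes Pa K n τ (cA w') (cC v) u then 1 else 0)) := by
            exact swap_out _ _ _
        _ ≤ ∑ w' ∈ Finset.univ.erase w, (Tv n τ)⁻¹ := by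
            refine Finset.sum_le_sum fun w' hw' => ?_
            have hww' : w ≠ w' := fun hh => (Finset.mem_erase.1 hw').1 hh.symm
            have := marg3 (pn_sum hPa.2 n) (pn_sum hPc.2 n) hww' v
              (fun x x' y => ∑ u : Fin n → B, (∏ i, K (x i) (y i) (u i)) *
                (if passes Pa K n τ x' y u then 1 else 0))
            rw [this]
            exact wrong_le hPa hPc hK
        _ ≤ (M:ℝ) * (Tv n τ)⁻¹ := by
            rw [Finset.sum_const]
            have hcard : (Finset.univ.erase w).card ≤ M := by
              calc (Finset.univ.erase w).card ≤ Finset.univ.card :=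
                Finset.card_le_card (Finset.erase_subset _ _)
              _ = M := by simp
            have : ((Finset.univ.erase w).card : ℝ) ≤ (M:ℝ) := by exact_mod_cast hcard
            calc ((Finset.univ.erase w).card : ℕ) • (Tv n τ)⁻¹
                = ((Finset.univ.erase w).card : ℝ) * (Tv n τ)⁻¹ := by
                  rw [nsmul_eq_mul]
              _ ≤ (M:ℝ) * (Tv n τ)⁻¹ :=
                  mul_le_mul_of_nonneg_right this (le_of_lt (inv_pos.2 hT))
    calc ∑ cA : Fin M → Fin n → A, ∑ cC : Fin M' → Fin n → C,
        ((∏ w, pn Pa n (cA w)) * ∏ v, pn Pc n (cC v)) *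
          (∑ w, ∑ v, ∑ w' ∈ Finset.univ.erase w, ∑ u : Fin n → B,
            (∏ i, K (cA w i) (cC v i) (u i)) *
              (if passes Pa K n τ (cA w') (cC v) u then 1 else 0))
        = ∑ w : Fin M, ∑ v : Fin M', ∑ cA : Fin M → Fin n → A, ∑ cC : Fin M' → Fin n → C,
            ((∏ w'', pn Pa n (cA w'')) * ∏ v'', pn Pc n (cC v'')) *
              (∑ w' ∈ Finset.univ.erase w, ∑ u : Fin n → B,
                (∏ i, K (cA w i) (cC v i) (u i)) *
                  (if passes Pa K n τ (cA w') (cC v) u then 1 else 0)) := by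
          refine Eq.trans ?_ (sum_swap4 _)
          refine Finset.sum_congr rfl fun cA _ => Finset.sum_congr rfl fun cC _ => ?_
          simp only [Finset.mul_sum]
      _ ≤ ∑ w : Fin M, ∑ v : Fin M', (M:ℝ) * (Tv n τ)⁻¹ :=
          Finset.sum_le_sum fun w _ => Finset.sum_le_sum fun v _ => hfix w v
      _ = (M:ℝ) * (M':ℝ) * ((M:ℝ) * (Tv n τ)⁻¹) := by
          simp [Finset.sum_const, Finset.card_univ]
          ring
  -- assemble
  calc ∑ cA : Fin M → Fin n → A, ∑ cC : Fin M' → Fin n → C,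
      ((∏ w, pn Pa n (cA w)) * ∏ v, pn Pc n (cC v)) *
        (((M:ℝ) * (M':ℝ))⁻¹ * ∑ w, ∑ v, ∑ u : Fin n → B,
          (∏ i, K (cA w i) (cC v i) (u i)) *
            (if Dec Pa K n τ cA (cC v) u ≠ some w then 1 else 0))
      = ((M:ℝ) * (M':ℝ))⁻¹ * ∑ cA : Fin M → Fin n → A, ∑ cC : Fin M' → Fin n → C,
          ((∏ w, pn Pa n (cA w)) * ∏ v, pn Pc n (cC v)) *
            (∑ w, ∑ v, ∑ u : Fin n → B,
              (∏ i, K (cA w i) (cC v i) (u i)) *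
                (if Dec Pa K n τ cA (cC v) u ≠ some w then 1 else 0)) := by
        rw [Finset.mul_sum]
        refine Finset.sum_congr rfl fun cA _ => ?_
        rw [Finset.mul_sum]
        refine Finset.sum_congr rfl fun cC _ => by ring
    _ ≤ ((M:ℝ) * (M':ℝ))⁻¹ * ((M:ℝ) * (M':ℝ) * FB
          + (M:ℝ) * (M':ℝ) * ((M:ℝ) * (Tv n τ)⁻¹)) := by
        refine mul_le_mul_of_nonneg_left ?_ (le_of_lt (inv_pos.2 hMM'))
        calc ∑ cA : Fin M → Fin n → A, ∑ cC : Fin M' → Fin n → C,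
            ((∏ w, pn Pa n (cA w)) * ∏ v, pn Pc n (cC v)) *
              (∑ w, ∑ v, ∑ u : Fin n → B,
                (∏ i, K (cA w i) (cC v i) (u i)) *
                  (if Dec Pa K n τ cA (cC v) u ≠ some w then 1 else 0))
            ≤ ∑ cA : Fin M → Fin n → A, ∑ cC : Fin M' → Fin n → C,
              ((∏ w, pn Pa n (cA w)) * ∏ v, pn Pc n (cC v)) *
                ((∑ w, ∑ v, ∑ u : Fin n → B,
                    (∏ i, K (cA w i) (cC v i) (u i)) *
                      (if ¬ passes Pa K n τ (cA w) (cC v) u then 1 else 0))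
                  + ∑ w, ∑ v, ∑ w' ∈ Finset.univ.erase w, ∑ u : Fin n → B,
                      (∏ i, K (cA w i) (cC v i) (u i)) *
                        (if passes Pa K n τ (cA w') (cC v) u then 1 else 0)) :=
              Finset.sum_le_sum fun cA _ => Finset.sum_le_sum fun cC _ =>
                mul_le_mul_of_nonneg_left (hinner cA cC) (hWgt0 cA cC)
          _ = (∑ cA : Fin M → Fin n → A, ∑ cC : Fin M' → Fin n → C,
                ((∏ w, pn Pa n (cA w)) * ∏ v, pn Pc n (cC v)) *
                  (∑ w, ∑ v, ∑ u : Fin n → B,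
                    (∏ i, K (cA w i) (cC v i) (u i)) *
                      (if ¬ passes Pa K n τ (cA w) (cC v) u then 1 else 0)))
              + ∑ cA : Fin M → Fin n → A, ∑ cC : Fin M' → Fin n → C,
                  ((∏ w, pn Pa n (cA w)) * ∏ v, pn Pc n (cC v)) *
                    (∑ w, ∑ v, ∑ w' ∈ Finset.univ.erase w, ∑ u : Fin n → B,
                      (∏ i, K (cA w i) (cC v i) (u i)) *
                        (if passes Pa K n τ (cA w') (cC v) u then 1 else 0)) := by
              rw [← Finset.sum_add_distrib]
              refine Finset.sum_congr rfl fun cA _ => ?_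
              rw [← Finset.sum_add_distrib]
              refine Finset.sum_congr rfl fun cC _ => by rw [mul_add]
          _ ≤ (M:ℝ) * (M':ℝ) * FB + (M:ℝ) * (M':ℝ) * ((M:ℝ) * (Tv n τ)⁻¹) :=
              add_le_add hSf hSw
    _ = FB + (M:ℝ) * (Tv n τ)⁻¹ := by
        field_simp
end Direction

lemma exists_le_single {γ : Type} [Fintype γ] {r : γ → ℝ} (h0 : ∀ c, 0 ≤ r c)
    (h1 : ∑ c, r c = 1) (g : γ → ℝ) : ∃ c, g c ≤ ∑ c, r c * g c := by
  by_contra hcon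
  push_neg at hcon
  have hne : ∃ c₀, 0 < r c₀ := by
    by_contra hz
    push_neg at hz
    have : ∀ c ∈ Finset.univ, r c = 0 := fun c _ => le_antisymm (hz c) (h0 c)
    rw [Finset.sum_congr rfl this] at h1
    simp at h1
  obtain ⟨c₀, hc₀⟩ := hne
  have hlt : ∑ c, r c * (∑ c', r c' * g c') < ∑ c, r c * g c := by
    refine Finset.sum_lt_sum (fun c _ => ?_) ⟨c₀, Finset.mem_univ c₀, ?_⟩
    · exact mul_le_mul_of_nonneg_left (le_of_lt (hcon c)) (h0 c)
    · exact mul_lt_mul_of_pos_left (hcon c₀) hc₀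
  rw [← Finset.sum_mul, h1, one_mul] at hlt
  exact lt_irrefl _ hlt

lemma exists_le_double {α β : Type} [Fintype α] [Fintype β] {p : α → ℝ} {q : β → ℝ}
    (hp0 : ∀ a, 0 ≤ p a) (hq0 : ∀ b, 0 ≤ q b) (hp1 : ∑ a, p a = 1) (hq1 : ∑ b, q b = 1)
    (f : α → β → ℝ) : ∃ a b, f a b ≤ ∑ a, ∑ b, p a * q b * f a b := by
  have h0 : ∀ t : α × β, 0 ≤ p t.1 * q t.2 := fun t => mul_nonneg (hp0 _) (hq0 _)
  have h1 : ∑ t : α × β, p t.1 * q t.2 = 1 := by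
    rw [Fintype.sum_prod_type]
    calc ∑ a, ∑ b, p a * q b = ∑ a, p a * ∑ b, q b :=
      Finset.sum_congr rfl fun a _ => (Finset.mul_sum _ _ _).symm
    _ = 1 := by rw [hq1]; simp [hp1]
  obtain ⟨t, ht⟩ := exists_le_single h0 h1 (fun t => f t.1 t.2)
  refine ⟨t.1, t.2, ht.trans_eq ?_⟩
  rw [Fintype.sum_prod_type]

lemma ind_or_le (p q : Prop) [Decidable p] [Decidable q] [Decidable (p ∨ q)] :
    (if p ∨ q then (1:ℝ) else 0) ≤ (if p then (1:ℝ) else 0) + (if q then (1:ℝ) else 0) := by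
  by_cases hp : p <;> by_cases hq : q <;> simp [hp, hq]

lemma nonempty_of_pmf {α : Type} [Fintype α] {p : α → ℝ} (hp : IsPMF p) : Nonempty α := by
  by_contra h
  rw [not_nonempty_iff] at h
  have := hp.2
  rw [Finset.sum_eq_zero (fun a _ => (h.false a).elim)] at this
  norm_num at this

end MacAux

lemma detErrProb_nonneg {𝒳₁ 𝒳₂ 𝒰 : Type} [Fintype 𝒰]
    {W : 𝒳₁ → 𝒳₂ → 𝒰 → ℝ} (hW : ∀ x₁ x₂, IsPMF (W x₁ x₂)) {n : ℕ} {R₁ R₂ : ℝ}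
    (C : DetCode 𝒳₁ 𝒳₂ 𝒰 n R₁ R₂) : 0 ≤ detErrProb W C := by
  refine mul_nonneg (inv_nonneg.2 (mul_nonneg (Nat.cast_nonneg _) (Nat.cast_nonneg _))) ?_
  refine Finset.sum_nonneg fun w₁ _ => Finset.sum_nonneg fun w₂ _ =>
    Finset.sum_nonneg fun u _ => mul_nonneg ?_ (by positivity)
  exact Finset.prod_nonneg fun i _ => (hW _ _).1 _

/-- with an honest relay, for any input pmfs `P₁, P₂` and any rate pair
with `0 < R₁ < I(X₁;U|X₂)` and `0 < R₂ < I(X₂;U|X₁)` there is a sequence of codes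
whose error probability vanishes. -/
theorem mac_achievability_honest_relay
    {𝒳₁ 𝒳₂ 𝒰 : Type} [Fintype 𝒳₁] [Fintype 𝒳₂] [Fintype 𝒰]
    (W : 𝒳₁ → 𝒳₂ → 𝒰 → ℝ) (hW : ∀ x₁ x₂, IsPMF (W x₁ x₂))
    (P₁ : 𝒳₁ → ℝ) (P₂ : 𝒳₂ → ℝ) (hP₁ : IsPMF P₁) (hP₂ : IsPMF P₂)
    (R₁ R₂ : ℝ) (hR₁ : 0 < R₁)
    (hR₁' : R₁ < condMI fun x₁ u x₂ => P₁ x₁ * P₂ x₂ * W x₁ x₂ u)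
    (hR₂ : 0 < R₂)
    (hR₂' : R₂ < condMI fun x₂ u x₁ => P₁ x₁ * P₂ x₂ * W x₁ x₂ u) :
    ∃ C : (n : ℕ) → DetCode 𝒳₁ 𝒳₂ 𝒰 n R₁ R₂,
      Tendsto (fun n => detErrProb W (C n)) atTop (𝓝 0) := by
  classical
  obtain ⟨x₁0⟩ := MacAux.nonempty_of_pmf hP₁
  obtain ⟨x₂0⟩ := MacAux.nonempty_of_pmf hP₂
  set K₂ : 𝒳₂ → 𝒳₁ → 𝒰 → ℝ := fun a c b => W c a b with hK₂def
  have hW₂ : ∀ a c, IsPMF (K₂ a c) := fun a c => hW c a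
  set I₁ : ℝ := MacAux.Exp (MacAux.p3 P₁ P₂ W) (MacAux.Zf P₁ W) with hI₁def
  set I₂ : ℝ := MacAux.Exp (MacAux.p3 P₂ P₁ K₂) (MacAux.Zf P₂ K₂) with hI₂def
  have hI₁ : condMI (fun x₁ u x₂ => P₁ x₁ * P₂ x₂ * W x₁ x₂ u) = I₁ := by
    rw [MacAux.condMI_eq P₁ P₂ W hP₁ hP₂ hW, hI₁def, MacAux.exp_Zf_eq]
  have hI₂ : condMI (fun x₂ u x₁ => P₁ x₁ * P₂ x₂ * W x₁ x₂ u) = I₂ := by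
    have harg : (fun x₂ u x₁ => P₁ x₁ * P₂ x₂ * W x₁ x₂ u)
        = (fun a b c => P₂ a * P₁ c * K₂ a c b) := by
      funext a b c; simp only [hK₂def]; ring
    rw [harg, MacAux.condMI_eq P₂ P₁ K₂ hP₂ hP₁ hW₂, hI₂def, MacAux.exp_Zf_eq]
  rw [hI₁] at hR₁'
  rw [hI₂] at hR₂'
  set τ₁ : ℝ := (R₁ + I₁)/2 with hτ₁def
  set τ₂ : ℝ := (R₂ + I₂)/2 with hτ₂def
  have hτ₁ : τ₁ < I₁ := by rw [hτ₁def]; linarith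
  have hτ₂ : τ₂ < I₂ := by rw [hτ₂def]; linarith
  have hRτ₁ : R₁ < τ₁ := by rw [hτ₁def]; linarith
  have hRτ₂ : R₂ < τ₂ := by rw [hτ₂def]; linarith
  set V₁ : ℝ := MacAux.Var (MacAux.p3 P₁ P₂ W) (MacAux.Zf P₁ W) with hV₁def
  set V₂ : ℝ := MacAux.Var (MacAux.p3 P₂ P₁ K₂) (MacAux.Zf P₂ K₂) with hV₂def
  set r₁ : ℝ := (2:ℝ) ^ (R₁ - τ₁) with hr₁def
  set r₂ : ℝ := (2:ℝ) ^ (R₂ - τ₂) with hr₂def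
  set B : ℕ → ℝ := fun n =>
    (V₂ / ((n:ℝ) * (I₂ - τ₂)^2) + 2 * r₂^n) + (V₁ / ((n:ℝ) * (I₁ - τ₁)^2) + 2 * r₁^n)
    with hBdef
  -- bound on M * Tv⁻¹
  have hMT : ∀ (R τ : ℝ), 0 < R → R < τ → ∀ n : ℕ,
      (nMsg n R : ℝ) * (MacAux.Tv n τ)⁻¹ ≤ 2 * ((2:ℝ) ^ (R - τ))^n := by
    intro R τ hR hRτ n
    have h2 : (0:ℝ) < 2 := two_pos
    have hcast : (nMsg n R : ℝ) = (2:ℝ) ^ ((⌈(n:ℝ) * R⌉₊ : ℕ) : ℝ) := by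
      rw [nMsg]
      push_cast
      rw [Real.rpow_natCast]
    have hTv : (MacAux.Tv n τ)⁻¹ = (2:ℝ) ^ (-((n:ℝ) * τ)) := by
      rw [MacAux.Tv, ← Real.rpow_neg (le_of_lt h2)]
    rw [hcast, hTv, ← Real.rpow_add h2]
    have hexp : ((⌈(n:ℝ) * R⌉₊ : ℕ) : ℝ) + -((n:ℝ) * τ) ≤ 1 + (n:ℝ) * (R - τ) := by
      have hceil : ((⌈(n:ℝ) * R⌉₊ : ℕ) : ℝ) ≤ (n:ℝ) * R + 1 :=
        le_of_lt (Nat.ceil_lt_add_one (mul_nonneg (Nat.cast_nonneg n) (le_of_lt hR)))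
      nlinarith
    calc (2:ℝ) ^ (((⌈(n:ℝ) * R⌉₊ : ℕ) : ℝ) + -((n:ℝ) * τ))
        ≤ (2:ℝ) ^ (1 + (n:ℝ) * (R - τ)) :=
          Real.rpow_le_rpow_of_exponent_le (le_of_lt one_lt_two) hexp
      _ = 2 * ((2:ℝ) ^ (R - τ))^n := by
          rw [Real.rpow_add h2, Real.rpow_one, mul_comm ((n:ℝ)) (R - τ),
            Real.rpow_mul (le_of_lt h2), Real.rpow_natCast]
  -- existence of good code for each n ≥ 1
  have hExist : ∀ n : ℕ, 1 ≤ n → ∃ Cn : DetCode 𝒳₁ 𝒳₂ 𝒰 n R₁ R₂,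
      detErrProb W Cn ≤ B n := by
    intro n hn
    have hM₁ : 1 ≤ nMsg n R₁ := Nat.one_le_iff_ne_zero.2 (by
      rw [nMsg]; positivity)
    have hM₂ : 1 ≤ nMsg n R₂ := Nat.one_le_iff_ne_zero.2 (by
      rw [nMsg]; positivity)
    set code : (Fin (nMsg n R₁) → Fin n → 𝒳₁) → (Fin (nMsg n R₂) → Fin n → 𝒳₂) →
        DetCode 𝒳₁ 𝒳₂ 𝒰 n R₁ R₂ := fun c₁ c₂ =>
      { enc₁ := c₁
        enc₂ := c₂
        dec₁ := fun u w₁ => MacAux.Dec P₂ K₂ n τ₂ c₂ (c₁ w₁) u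
        dec₂ := fun u w₂ => MacAux.Dec P₁ W n τ₁ c₁ (c₂ w₂) u } with hcodedef
    have hsplit : ∀ c₁ c₂, detErrProb W (code c₁ c₂) ≤
        (((nMsg n R₁ : ℝ) * (nMsg n R₂ : ℝ))⁻¹ *
          ∑ w₁, ∑ w₂, ∑ u : Fin n → 𝒰, Wn W (c₁ w₁) (c₂ w₂) u *
            (if MacAux.Dec P₂ K₂ n τ₂ c₂ (c₁ w₁) u ≠ some w₂ then 1 else 0))
        + (((nMsg n R₁ : ℝ) * (nMsg n R₂ : ℝ))⁻¹ *
            ∑ w₁, ∑ w₂, ∑ u : Fin n → 𝒰, Wn W (c₁ w₁) (c₂ w₂) u *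
              (if MacAux.Dec P₁ W n τ₁ c₁ (c₂ w₂) u ≠ some w₁ then 1 else 0)) := by
      intro c₁ c₂
      rw [detErrProb, ← mul_add]
      refine mul_le_mul_of_nonneg_left ?_ (by positivity)
      rw [← Finset.sum_add_distrib]
      refine Finset.sum_le_sum fun w₁ _ => ?_
      rw [← Finset.sum_add_distrib]
      refine Finset.sum_le_sum fun w₂ _ => ?_
      rw [← Finset.sum_add_distrib]
      refine Finset.sum_le_sum fun u _ => ?_
      rw [← mul_add]
      refine mul_le_mul_of_nonneg_left ?_
        (Finset.prod_nonneg fun i _ => (hW _ _).1 _)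
      exact MacAux.ind_or_le _ _
    -- weights
    have hw10 : ∀ c₁ : Fin (nMsg n R₁) → Fin n → 𝒳₁,
        0 ≤ ∏ w, MacAux.pn P₁ n (c₁ w) :=
      fun c₁ => Finset.prod_nonneg fun w _ => MacAux.pn_nonneg' hP₁.1 _
    have hw20 : ∀ c₂ : Fin (nMsg n R₂) → Fin n → 𝒳₂,
        0 ≤ ∏ v, MacAux.pn P₂ n (c₂ v) :=
      fun c₂ => Finset.prod_nonneg fun v _ => MacAux.pn_nonneg' hP₂.1 _
    have hw11 : ∑ c₁ : Fin (nMsg n R₁) → Fin n → 𝒳₁, ∏ w, MacAux.pn P₁ n (c₁ w) = 1 := by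
      rw [MacAux.sum_fn_prod (fun _ x => MacAux.pn P₁ n x)]
      simp [MacAux.pn_sum hP₁.2 n]
    have hw21 : ∑ c₂ : Fin (nMsg n R₂) → Fin n → 𝒳₂, ∏ v, MacAux.pn P₂ n (c₂ v) = 1 := by
      rw [MacAux.sum_fn_prod (fun _ x => MacAux.pn P₂ n x)]
      simp [MacAux.pn_sum hP₂.2 n]
    -- expectation bound
    have key : ∑ c₁ : Fin (nMsg n R₁) → Fin n → 𝒳₁,
        ∑ c₂ : Fin (nMsg n R₂) → Fin n → 𝒳₂,
        (∏ w, MacAux.pn P₁ n (c₁ w)) * (∏ v, MacAux.pn P₂ n (c₂ v)) *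
          detErrProb W (code c₁ c₂) ≤ B n := by
      have hEB : ∑ c₁ : Fin (nMsg n R₁) → Fin n → 𝒳₁,
          ∑ c₂ : Fin (nMsg n R₂) → Fin n → 𝒳₂,
          ((∏ w, MacAux.pn P₁ n (c₁ w)) * ∏ v, MacAux.pn P₂ n (c₂ v)) *
            (((nMsg n R₁ : ℝ) * (nMsg n R₂ : ℝ))⁻¹ *
              ∑ w₁, ∑ w₂, ∑ u : Fin n → 𝒰, Wn W (c₁ w₁) (c₂ w₂) u *
                (if MacAux.Dec P₁ W n τ₁ c₁ (c₂ w₂) u ≠ some w₁ then 1 else 0))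
          ≤ V₁ / ((n:ℝ) * (I₁ - τ₁)^2) + (nMsg n R₁ : ℝ) * (MacAux.Tv n τ₁)⁻¹ :=
        MacAux.dir_bound hP₁ hP₂ hW hn hM₁ hM₂ hτ₁
      have hEAeq : ∑ c₁ : Fin (nMsg n R₁) → Fin n → 𝒳₁,
          ∑ c₂ : Fin (nMsg n R₂) → Fin n → 𝒳₂,
          ((∏ w, MacAux.pn P₁ n (c₁ w)) * ∏ v, MacAux.pn P₂ n (c₂ v)) *
            (((nMsg n R₁ : ℝ) * (nMsg n R₂ : ℝ))⁻¹ *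
              ∑ w₁, ∑ w₂, ∑ u : Fin n → 𝒰, Wn W (c₁ w₁) (c₂ w₂) u *
                (if MacAux.Dec P₂ K₂ n τ₂ c₂ (c₁ w₁) u ≠ some w₂ then 1 else 0))
          = ∑ c₂ : Fin (nMsg n R₂) → Fin n → 𝒳₂,
            ∑ c₁ : Fin (nMsg n R₁) → Fin n → 𝒳₁,
            ((∏ w, MacAux.pn P₂ n (c₂ w)) * ∏ v, MacAux.pn P₁ n (c₁ v)) *
              (((nMsg n R₂ : ℝ) * (nMsg n R₁ : ℝ))⁻¹ *
                ∑ w₂, ∑ w₁, ∑ u : Fin n → 𝒰,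
                  (∏ i, K₂ (c₂ w₂ i) (c₁ w₁ i) (u i)) *
                    (if MacAux.Dec P₂ K₂ n τ₂ c₂ (c₁ w₁) u ≠ some w₂ then 1 else 0)) := by
        rw [Finset.sum_comm]
        refine Finset.sum_congr rfl fun c₂ _ => Finset.sum_congr rfl fun c₁ _ => ?_
        have hker : ∀ (w₂ : Fin (nMsg n R₂)) (w₁ : Fin (nMsg n R₁))
            (u : Fin n → 𝒰), (∏ i, K₂ (c₂ w₂ i) (c₁ w₁ i) (u i))
              = Wn W (c₁ w₁) (c₂ w₂) u := by
          intro w₂ w₁ u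
          rw [Wn]
        have hswap : ∑ w₂ : Fin (nMsg n R₂), ∑ w₁ : Fin (nMsg n R₁),
            ∑ u : Fin n → 𝒰, (∏ i, K₂ (c₂ w₂ i) (c₁ w₁ i) (u i)) *
              (if MacAux.Dec P₂ K₂ n τ₂ c₂ (c₁ w₁) u ≠ some w₂ then 1 else 0)
            = ∑ w₁ : Fin (nMsg n R₁), ∑ w₂ : Fin (nMsg n R₂),
              ∑ u : Fin n → 𝒰, Wn W (c₁ w₁) (c₂ w₂) u *
                (if MacAux.Dec P₂ K₂ n τ₂ c₂ (c₁ w₁) u ≠ some w₂ then 1 else 0) := by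
          rw [Finset.sum_comm]
          exact Finset.sum_congr rfl fun w₁ _ => Finset.sum_congr rfl fun w₂ _ =>
            Finset.sum_congr rfl fun u _ => by rw [hker]
        rw [hswap, show ((nMsg n R₂ : ℝ) * (nMsg n R₁ : ℝ))⁻¹
          = ((nMsg n R₁ : ℝ) * (nMsg n R₂ : ℝ))⁻¹ by rw [mul_comm]]
        ring
      have hEA : ∑ c₁ : Fin (nMsg n R₁) → Fin n → 𝒳₁,
          ∑ c₂ : Fin (nMsg n R₂) → Fin n → 𝒳₂,
          ((∏ w, MacAux.pn P₁ n (c₁ w)) * ∏ v, MacAux.pn P₂ n (c₂ v)) *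
            (((nMsg n R₁ : ℝ) * (nMsg n R₂ : ℝ))⁻¹ *
              ∑ w₁, ∑ w₂, ∑ u : Fin n → 𝒰, Wn W (c₁ w₁) (c₂ w₂) u *
                (if MacAux.Dec P₂ K₂ n τ₂ c₂ (c₁ w₁) u ≠ some w₂ then 1 else 0))
          ≤ V₂ / ((n:ℝ) * (I₂ - τ₂)^2) + (nMsg n R₂ : ℝ) * (MacAux.Tv n τ₂)⁻¹ := by
        rw [hEAeq]
        exact MacAux.dir_bound hP₂ hP₁ hW₂ hn hM₂ hM₁ hτ₂
      calc ∑ c₁ : Fin (nMsg n R₁) → Fin n → 𝒳₁,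
          ∑ c₂ : Fin (nMsg n R₂) → Fin n → 𝒳₂,
          (∏ w, MacAux.pn P₁ n (c₁ w)) * (∏ v, MacAux.pn P₂ n (c₂ v)) *
            detErrProb W (code c₁ c₂)
          ≤ ∑ c₁ : Fin (nMsg n R₁) → Fin n → 𝒳₁,
            ∑ c₂ : Fin (nMsg n R₂) → Fin n → 𝒳₂,
            ((∏ w, MacAux.pn P₁ n (c₁ w)) * ∏ v, MacAux.pn P₂ n (c₂ v)) *
              ((((nMsg n R₁ : ℝ) * (nMsg n R₂ : ℝ))⁻¹ *
                ∑ w₁, ∑ w₂, ∑ u : Fin n → 𝒰, Wn W (c₁ w₁) (c₂ w₂) u *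
                  (if MacAux.Dec P₂ K₂ n τ₂ c₂ (c₁ w₁) u ≠ some w₂ then 1 else 0))
              + (((nMsg n R₁ : ℝ) * (nMsg n R₂ : ℝ))⁻¹ *
                  ∑ w₁, ∑ w₂, ∑ u : Fin n → 𝒰, Wn W (c₁ w₁) (c₂ w₂) u *
                    (if MacAux.Dec P₁ W n τ₁ c₁ (c₂ w₂) u ≠ some w₁ then 1 else 0))) :=
            Finset.sum_le_sum fun c₁ _ => Finset.sum_le_sum fun c₂ _ =>
              mul_le_mul_of_nonneg_left (hsplit c₁ c₂)
                (mul_nonneg (hw10 c₁) (hw20 c₂))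
        _ = (∑ c₁ : Fin (nMsg n R₁) → Fin n → 𝒳₁,
              ∑ c₂ : Fin (nMsg n R₂) → Fin n → 𝒳₂,
              ((∏ w, MacAux.pn P₁ n (c₁ w)) * ∏ v, MacAux.pn P₂ n (c₂ v)) *
                (((nMsg n R₁ : ℝ) * (nMsg n R₂ : ℝ))⁻¹ *
                  ∑ w₁, ∑ w₂, ∑ u : Fin n → 𝒰, Wn W (c₁ w₁) (c₂ w₂) u *
                    (if MacAux.Dec P₂ K₂ n τ₂ c₂ (c₁ w₁) u ≠ some w₂ then 1 else 0)))
            + ∑ c₁ : Fin (nMsg n R₁) → Fin n → 𝒳₁,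
              ∑ c₂ : Fin (nMsg n R₂) → Fin n → 𝒳₂,
              ((∏ w, MacAux.pn P₁ n (c₁ w)) * ∏ v, MacAux.pn P₂ n (c₂ v)) *
                (((nMsg n R₁ : ℝ) * (nMsg n R₂ : ℝ))⁻¹ *
                  ∑ w₁, ∑ w₂, ∑ u : Fin n → 𝒰, Wn W (c₁ w₁) (c₂ w₂) u *
                    (if MacAux.Dec P₁ W n τ₁ c₁ (c₂ w₂) u ≠ some w₁ then 1 else 0)) := by
            rw [← Finset.sum_add_distrib]
            refine Finset.sum_congr rfl fun c₁ _ => ?_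
            rw [← Finset.sum_add_distrib]
            refine Finset.sum_congr rfl fun c₂ _ => by rw [mul_add]
        _ ≤ (V₂ / ((n:ℝ) * (I₂ - τ₂)^2) + (nMsg n R₂ : ℝ) * (MacAux.Tv n τ₂)⁻¹)
            + (V₁ / ((n:ℝ) * (I₁ - τ₁)^2) + (nMsg n R₁ : ℝ) * (MacAux.Tv n τ₁)⁻¹) :=
            add_le_add hEA hEB
        _ ≤ B n := by
            rw [hBdef]
            have h1 := hMT R₁ τ₁ hR₁ hRτ₁ n
            have h2 := hMT R₂ τ₂ hR₂ hRτ₂ n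
            rw [← hr₁def, ← hr₂def] at *
            exact add_le_add (add_le_add le_rfl h2) (add_le_add le_rfl h1)
    obtain ⟨c₁, c₂, hc⟩ := MacAux.exists_le_double hw10 hw20 hw11 hw21
      (fun c₁ c₂ => detErrProb W (code c₁ c₂))
    exact ⟨code c₁ c₂, le_trans hc key⟩
  -- choose codes
  set C : (n : ℕ) → DetCode 𝒳₁ 𝒳₂ 𝒰 n R₁ R₂ := fun n =>
    if h : 1 ≤ n then (hExist n h).choose
    else { enc₁ := fun _ _ => x₁0, enc₂ := fun _ _ => x₂0,
           dec₁ := fun _ _ => none, dec₂ := fun _ _ => none } with hCdef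
  refine ⟨C, ?_⟩
  -- limit of B
  have hB0 : Tendsto B atTop (𝓝 0) := by
    have hgen : ∀ (V D : ℝ), Tendsto (fun n : ℕ => V / ((n:ℝ) * D)) atTop (𝓝 0) := by
      intro V D
      have heq : (fun n : ℕ => V / ((n:ℝ) * D)) = fun n : ℕ => (V / D) * (1 / (n:ℝ)) := by
        funext n
        rw [mul_one_div, div_div, mul_comm]
      rw [heq]
      simpa using tendsto_one_div_atTop_nhds_zero_nat.const_mul (V / D)
    have hr : ∀ (R τ : ℝ), R < τ → Tendsto (fun n : ℕ => 2 * ((2:ℝ)^(R - τ))^n) atTop (𝓝 0) := by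
      intro R τ h
      have h0 : (0:ℝ) ≤ (2:ℝ)^(R - τ) := le_of_lt (Real.rpow_pos_of_pos two_pos _)
      have h1 : (2:ℝ)^(R - τ) < 1 :=
        Real.rpow_lt_one_of_one_lt_of_neg one_lt_two (by linarith)
      simpa using (tendsto_pow_atTop_nhds_zero_of_lt_one h0 h1).const_mul (2:ℝ)
    have := ((hgen V₂ ((I₂ - τ₂)^2)).add (hr R₂ τ₂ hRτ₂)).add
      ((hgen V₁ ((I₁ - τ₁)^2)).add (hr R₁ τ₁ hRτ₁))
    simpa [hBdef, hr₁def, hr₂def] using this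
  -- squeeze
  have hub : ∀ᶠ n in atTop, detErrProb W (C n) ≤ B n := by
    filter_upwards [eventually_ge_atTop 1] with n hn
    rw [hCdef]
    simp only [dif_pos hn]
    exact (hExist n hn).choose_spec
  have hlb : ∀ᶠ (n : ℕ) in atTop, (0:ℝ) ≤ detErrProb W (C n) :=
    Filter.Eventually.of_forall fun n => detErrProb_nonneg hW (C n)
  exact tendsto_of_tendsto_of_tendsto_of_le_of_le' tendsto_const_nhds hB0 hlb hub
end
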